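/- arXiv:2505.06879 — 5 statements merged into one kernel-verified Lean document; each statement's English description precedes it below -/
import Mathlib

section
/- Let G be a finite group. Then the limit as g → ∞ of #Hom(π₁(Σ_g), G) / #G^{2g} equals 1/#[G,G], where Hom(π₁(Σ_g), G) is identified with the set of 2g-tuples (A₁,B₁,...,A_g,B_g) ∈ G^{2g} satisfying ∏ᵢ [Aᵢ,Bᵢ] = 1. -/
open scoped commutatorElement

open Finset

namespace SurfaceCount

variable {G : Type*} [Group G] [Fintype G]

noncomputable def conv (f g : G → ℝ) : G → ℝ := fun x => ∑ a, f a * g (a⁻¹ * x)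

open Classical in
noncomputable def delta : G → ℝ := fun x => if x = 1 then 1 else 0

noncomputable def mu (G : Type*) [Group G] [Fintype G] : G → ℝ := fun c =>
  (Nat.card {p : G × G // ⁅p.1, p.2⁆ = c} : ℝ) / (Fintype.card G : ℝ) ^ 2

noncomputable def mus : ℕ → G → ℝ
  | 0 => delta
  | (g + 1) => conv (mu G) (mus g)

lemma conv_assoc (f g h : G → ℝ) : conv (conv f g) h = conv f (conv g h) := by
  funext x
  simp only [conv, Finset.sum_mul, Finset.mul_sum]
  rw [Finset.sum_comm]
  refine Finset.sum_congr rfl fun b _ => ?_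
  refine (Fintype.sum_equiv (Equiv.mulLeft b) _ _ fun c => ?_).symm
  simp [mul_assoc, mul_inv_rev]

lemma conv_delta (f : G → ℝ) : conv delta f = f := by
  classical
  funext x
  simp [conv, delta, ite_mul]

lemma sum_shift (w : G → ℝ) (x : G) : ∑ a, w (a⁻¹ * x) = ∑ a, w a := by
  refine Fintype.sum_equiv ((Equiv.inv G).trans (Equiv.mulRight x)) _ _ fun a => rfl

lemma sum_conv (f g : G → ℝ) : ∑ x, conv f g x = (∑ a, f a) * (∑ a, g a) := by
  simp only [conv]
  rw [Finset.sum_comm, Finset.sum_mul]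
  refine Finset.sum_congr rfl fun a _ => ?_
  rw [← Finset.mul_sum]
  congr 1
  exact Fintype.sum_equiv (Equiv.mulLeft a⁻¹) _ _ fun x => rfl

lemma conv_nonneg {f g : G → ℝ} (hf : ∀ a, 0 ≤ f a) (hg : ∀ a, 0 ≤ g a) (x : G) :
    0 ≤ conv f g x :=
  Finset.sum_nonneg fun a _ => mul_nonneg (hf a) (hg _)

lemma conv_support {H : Subgroup G} {f g : G → ℝ} (hf : ∀ a, a ∉ H → f a = 0)
    (hg : ∀ a, a ∉ H → g a = 0) : ∀ x, x ∉ H → conv f g x = 0 := by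
  intro x hx
  refine Finset.sum_eq_zero fun a _ => ?_
  by_cases ha : a ∈ H
  · rw [hg _ (fun hm => hx (by simpa using mul_mem ha hm)), mul_zero]
  · rw [hf _ ha, zero_mul]


lemma card_pos' : (0:ℝ) < (Fintype.card G : ℝ) ^ 2 := by positivity

lemma mu_nonneg (c : G) : 0 ≤ mu G c := by
  unfold mu; positivity

lemma sum_mu : ∑ c, mu G c = 1 := by
  unfold mu
  rw [← Finset.sum_div]
  rw [div_eq_one_iff_eq (by positivity)]
  have : ∑ c : G, (Nat.card {p : G × G // ⁅p.1, p.2⁆ = c}) = Nat.card (G × G) := by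
    classical
    simp only [Nat.card_eq_fintype_card]
    rw [← Fintype.card_sigma]
    exact Fintype.card_congr (Equiv.sigmaFiberEquiv fun p : G × G => ⁅p.1, p.2⁆)
  rw [← Nat.cast_sum, this, Nat.card_eq_fintype_card, Fintype.card_prod]
  push_cast; ring

lemma mu_support (c : G) (hc : c ∉ commutator G) : mu G c = 0 := by
  unfold mu
  have : IsEmpty {p : G × G // ⁅p.1, p.2⁆ = c} := by
    refine ⟨fun ⟨p, hp⟩ => hc ?_⟩
    rw [← hp]
    exact Subgroup.commutator_mem_commutator (Subgroup.mem_top _) (Subgroup.mem_top _)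
  rw [Nat.card_of_isEmpty]
  simp

lemma mu_pos {c : G} (hc : c ∈ commutatorSet G) : 0 < mu G c := by
  obtain ⟨a, b, rfl⟩ := hc
  unfold mu
  have : 0 < Nat.card {p : G × G // ⁅p.1, p.2⁆ = ⁅a, b⁆} := by
    haveI : Nonempty {p : G × G // ⁅p.1, p.2⁆ = ⁅a, b⁆} := ⟨⟨(a, b), rfl⟩⟩
    exact Nat.card_pos
  positivity

lemma mus_nonneg (g : ℕ) (c : G) : 0 ≤ mus g c := by
  induction g generalizing c with
  | zero => unfold mus delta; positivity
  | succ g ih => exact conv_nonneg mu_nonneg (fun a => ih a) c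

lemma sum_mus (g : ℕ) : ∑ c : G, mus g c = 1 := by
  induction g with
  | zero => classical simp [mus, delta]
  | succ g ih => rw [mus, sum_conv, sum_mu, ih, mul_one]

lemma mus_support (g : ℕ) : ∀ c, c ∉ commutator G → mus g c = 0 := by
  induction g with
  | zero =>
    intro c hc
    have : c ≠ 1 := fun h => hc (h ▸ Subgroup.one_mem _)
    classical simp [mus, delta, this]
  | succ g ih => exact conv_support mu_support ih

lemma mus_le_one (g : ℕ) (c : G) : mus g c ≤ 1 := by
  calc mus g c ≤ ∑ x, mus g x :=
        Finset.single_le_sum (fun x _ => mus_nonneg g x) (Finset.mem_univ c)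
    _ = 1 := sum_mus g

lemma mus_add (a b : ℕ) : (mus (a + b) : G → ℝ) = conv (mus a) (mus b) := by
  induction a with
  | zero => simp [mus, conv_delta]
  | succ a ih =>
    have : a + 1 + b = (a + b) + 1 := by ring
    rw [this, mus, ih, ← conv_assoc]
    rfl

lemma mus_succ_ge (g : ℕ) (s x : G) : mu G s * mus g (s⁻¹ * x) ≤ mus (g + 1) x := by
  have h : mus (g + 1) x = ∑ a, mu G a * mus g (a⁻¹ * x) := rfl
  rw [h]
  exact Finset.single_le_sum (f := fun a => mu G a * mus g (a⁻¹ * x))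
    (fun a _ => mul_nonneg (mu_nonneg a) (mus_nonneg g _)) (Finset.mem_univ s)

lemma mus_one_pos (g : ℕ) : 0 < mus g (1 : G) := by
  induction g with
  | zero => classical simp [mus, delta]
  | succ g ih =>
    calc (0:ℝ) < mu G 1 * mus g (1 : G) := by
          have : (1:G) ∈ commutatorSet G := one_mem_commutatorSet G
          exact mul_pos (mu_pos this) ih
      _ = mu G 1 * mus g ((1 : G)⁻¹ * 1) := by simp
      _ ≤ mus (g + 1) (1 : G) := mus_succ_ge g 1 1

lemma mus_prod_pos (l : List G) (hl : ∀ y ∈ l, y ∈ commutatorSet G) :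
    ∀ g, l.length ≤ g → 0 < mus g l.prod := by
  induction l with
  | nil => intro g _; simpa using mus_one_pos g
  | cons s l ih =>
    intro g hg
    cases g with
    | zero => simp at hg
    | succ g =>
      have hlen : l.length ≤ g := by simpa using hg
      have hs : s ∈ commutatorSet G := hl s (by simp)
      have hrest := ih (fun y hy => hl y (by simp [hy])) g hlen
      calc (0:ℝ) < mu G s * mus g l.prod := mul_pos (mu_pos hs) hrest
        _ = mu G s * mus g (s⁻¹ * (s * l.prod)) := by simp
        _ ≤ mus (g + 1) (s * l.prod) := mus_succ_ge g s _
      |>.trans_eq (by simp)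


abbrev T (G : Type*) [Group G] (g : ℕ) (c : G) :=
  {f : Fin g → G × G // (List.ofFn fun i => ⁅(f i).1, (f i).2⁆).prod = c}

def splitEquiv (g : ℕ) (c : G) :
    T G (g + 1) c ≃ Σ a : G, {p : G × G // ⁅p.1, p.2⁆ = a} × T G g (a⁻¹ * c) where
  toFun f :=
    ⟨⁅(f.1 0).1, (f.1 0).2⁆, ⟨f.1 0, rfl⟩,
      ⟨fun i => f.1 i.succ, by
        have hf := f.2
        rw [List.ofFn_succ, List.prod_cons] at hf
        exact eq_inv_mul_of_mul_eq hf⟩⟩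
  invFun x :=
    ⟨Fin.cons x.2.1.1 x.2.2.1, by
      rw [List.ofFn_succ, List.prod_cons]
      simp only [Fin.cons_zero, Fin.cons_succ]
      rw [x.2.2.2, x.2.1.2, mul_inv_cancel_left]⟩
  left_inv f := by
    apply Subtype.ext
    exact Fin.cons_self_tail f.1
  right_inv := by
    rintro ⟨a, ⟨p, rfl⟩, f, hf⟩
    rfl

lemma count_lemma (g : ℕ) (c : G) :
    (Nat.card (T G g c) : ℝ) / (Fintype.card G : ℝ) ^ (2 * g) = mus g c := by
  classical
  induction g generalizing c with
  | zero =>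
    by_cases hc : c = 1
    · subst hc
      have : Nat.card (T G 0 1) = 1 := by
        rw [Nat.card_eq_one_iff_unique]
        constructor
        · exact ⟨fun f f' => Subtype.ext (funext fun i => i.elim0)⟩
        · exact ⟨⟨fun i => i.elim0, by simp⟩⟩
      rw [this]
      simp [mus, delta]
    · have : IsEmpty (T G 0 c) := by
        refine ⟨fun f => hc ?_⟩
        have := f.2
        simpa using this.symm
      rw [Nat.card_of_isEmpty]
      simp [mus, delta, hc]
  | succ g ih =>
    have hcard : Nat.card (T G (g + 1) c)
        = ∑ a : G, Nat.card {p : G × G // ⁅p.1, p.2⁆ = a} * Nat.card (T G g (a⁻¹ * c)) := by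
      rw [Nat.card_congr (splitEquiv g c)]
      simp only [Nat.card_eq_fintype_card]
      rw [Fintype.card_sigma]
      exact Finset.sum_congr rfl fun a _ => Fintype.card_prod _ _
    have hq : (0:ℝ) < (Fintype.card G : ℝ) := by positivity
    have : mus (g + 1) c = ∑ a : G, mu G a * mus g (a⁻¹ * c) := rfl
    rw [this, hcard]
    push_cast
    rw [Finset.sum_div]
    refine Finset.sum_congr rfl fun a _ => ?_
    rw [← ih (a⁻¹ * c)]
    unfold mu
    have h2 : 2 * (g + 1) = 2 + 2 * g := by ring
    rw [h2, pow_add]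
    field_simp
    try ring


lemma contract (H : Subgroup G) (f rho : G → ℝ) (B eps : ℝ) (hB : 0 ≤ B)
    (hf0 : ∀ a, a ∉ H → f a = 0) (hf1 : ∑ a, f a = 1)
    (hfB : ∀ a ∈ H, |f a - 1 / (Nat.card H : ℝ)| ≤ B)
    (hrho0 : ∀ a, a ∉ H → rho a = 0) (hrho1 : ∑ a, rho a = 1)
    (hrhoe : ∀ a ∈ H, eps / (Nat.card H : ℝ) ≤ rho a) :
    ∀ x ∈ H, |conv f rho x - 1 / (Nat.card H : ℝ)| ≤ (1 - eps) * B := by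
  classical
  intro x hx
  set h : ℝ := (Nat.card H : ℝ) with hh
  have hhpos : 0 < h := by
    have : 0 < Nat.card H := Nat.card_pos
    rw [hh]
    exact_mod_cast this
  set w : G → ℝ := fun a => rho a - eps * (if a ∈ H then 1 / h else 0) with hw
  have hw0 : ∀ a, 0 ≤ w a := by
    intro a
    by_cases ha : a ∈ H
    · have := hrhoe a ha
      simp only [hw, ha, if_true]
      rw [div_eq_mul_one_div] at this
      linarith [this]
    · simp [hw, ha, hrho0 a ha]
  have hmemiff : ∀ a : G, (a⁻¹ * x ∈ H) ↔ a ∈ H := by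
    intro a
    constructor
    · intro hm
      have : x * (a⁻¹ * x)⁻¹ ∈ H := mul_mem hx (inv_mem hm)
      simpa [mul_assoc] using this
    · intro ha
      exact mul_mem (inv_mem ha) hx
  have hsumind : ∑ a : G, (if a ∈ H then (1:ℝ) / h else 0) = 1 := by
    rw [← Finset.sum_filter, Finset.sum_const, nsmul_eq_mul]
    have hcard : ((Finset.univ.filter (fun a => a ∈ H)).card : ℝ) = h := by
      rw [hh]
      norm_cast
      rw [Nat.card_eq_fintype_card, Fintype.card_subtype]
    rw [hcard, mul_one_div_cancel hhpos.ne']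
  have hsumw : ∑ a, w a = 1 - eps := by
    simp only [hw]
    rw [Finset.sum_sub_distrib, hrho1, ← Finset.mul_sum, hsumind, mul_one]
  have key : conv f rho x - 1 / h = ∑ a, (f a - 1 / h) * w (a⁻¹ * x) := by
    have hrhoeq : ∀ b : G, rho b = eps * (if b ∈ H then 1 / h else 0) + w b := by
      intro b; simp [hw]
    have e1 : conv f rho x
        = eps * (∑ a, f a * (if a⁻¹ * x ∈ H then 1 / h else 0)) + ∑ a, f a * w (a⁻¹ * x) := by
      simp only [conv]
      rw [Finset.mul_sum, ← Finset.sum_add_distrib]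
      refine Finset.sum_congr rfl fun a _ => ?_
      rw [hrhoeq (a⁻¹ * x)]
      ring
    have e2 : ∑ a, f a * (if a⁻¹ * x ∈ H then (1:ℝ) / h else 0) = 1 / h := by
      have : ∀ a : G, f a * (if a⁻¹ * x ∈ H then (1:ℝ) / h else 0) = f a * (1 / h) := by
        intro a
        by_cases ha : a ∈ H
        · rw [if_pos ((hmemiff a).2 ha)]
        · rw [hf0 a ha, zero_mul, zero_mul]
      rw [Finset.sum_congr rfl fun a _ => this a, ← Finset.sum_mul, hf1, one_mul]
    have e3 : ∑ a, ((1:ℝ) / h) * w (a⁻¹ * x) = (1 - eps) / h := by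
      rw [← Finset.mul_sum, sum_shift w x, hsumw]
      ring
    rw [e1, e2]
    have e4 : ∑ a, (f a - 1 / h) * w (a⁻¹ * x)
        = ∑ a, f a * w (a⁻¹ * x) - ∑ a, (1 / h) * w (a⁻¹ * x) := by
      rw [← Finset.sum_sub_distrib]
      exact Finset.sum_congr rfl fun a _ => sub_mul _ _ _
    rw [e4, e3]
    ring
  rw [key]
  calc |∑ a, (f a - 1 / h) * w (a⁻¹ * x)| ≤ ∑ a, |(f a - 1 / h) * w (a⁻¹ * x)| :=
        Finset.abs_sum_le_sum_abs _ _
    _ ≤ ∑ a, B * w (a⁻¹ * x) := by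
        refine Finset.sum_le_sum fun a _ => ?_
        by_cases ha : a ∈ H
        · rw [abs_mul, abs_of_nonneg (hw0 _)]
          exact mul_le_mul_of_nonneg_right (hfB a ha) (hw0 _)
        · have : w (a⁻¹ * x) = 0 := by
            have hnm : a⁻¹ * x ∉ H := fun hm => ha ((hmemiff a).1 hm)
            simp [hw, hnm, hrho0 _ hnm]
          rw [this, mul_zero, mul_zero, abs_zero]
    _ = B * (1 - eps) := by rw [← Finset.mul_sum, sum_shift w x, hsumw]
    _ = (1 - eps) * B := mul_comm _ _


lemma exists_commutator_list (x : G) (hx : x ∈ commutator G) :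
    ∃ l : List G, (∀ y ∈ l, y ∈ commutatorSet G) ∧ l.prod = x := by
  rw [commutator_eq_closure] at hx
  induction hx using Subgroup.closure_induction with
  | mem y hy => exact ⟨[y], by simpa using hy, by simp⟩
  | one => exact ⟨[], by simp, rfl⟩
  | mul y z hy hz ihy ihz =>
    obtain ⟨l1, hl1, hp1⟩ := ihy
    obtain ⟨l2, hl2, hp2⟩ := ihz
    refine ⟨l1 ++ l2, ?_, by rw [List.prod_append, hp1, hp2]⟩
    intro a ha
    rcases List.mem_append.1 ha with h | h
    · exact hl1 a h
    · exact hl2 a h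
  | inv y hy ihy =>
    obtain ⟨l, hl, hp⟩ := ihy
    refine ⟨(l.map fun a => a⁻¹).reverse, ?_, by rw [← List.prod_inv_reverse, hp]⟩
    intro a ha
    rw [List.mem_reverse, List.mem_map] at ha
    obtain ⟨b, hb, rfl⟩ := ha
    obtain ⟨c, d, rfl⟩ := hl b hb
    exact ⟨d, c, (commutatorElement_inv c d).symm⟩

theorem main_result :
    Filter.Tendsto
      (fun g : ℕ =>
        (Nat.card {f : Fin g → G × G //
            (List.ofFn fun i => ⁅(f i).1, (f i).2⁆).prod = 1} : ℝ) /
          (Fintype.card G : ℝ) ^ (2 * g))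
      Filter.atTop (nhds (1 / (Nat.card (commutator G) : ℝ))) := by
  classical
  set H := commutator G with hH
  set h : ℝ := (Nat.card H : ℝ) with hh
  have hhpos : 0 < h := by
    have : 0 < Nat.card H := Nat.card_pos
    rw [hh]; exact_mod_cast this
  have hh1 : 1 ≤ h := by
    have : 1 ≤ Nat.card H := Nat.card_pos
    rw [hh]; exact_mod_cast this
  -- choose g₀
  have hN : ∀ x : G, ∃ N : ℕ, x ∈ H → ∀ g, N ≤ g → 0 < mus g x := by
    intro x
    by_cases hx : x ∈ H
    · obtain ⟨l, hl, hp⟩ := exists_commutator_list x hx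
      exact ⟨l.length, fun _ g hg => hp ▸ mus_prod_pos l hl g hg⟩
    · exact ⟨0, fun hmem => absurd hmem hx⟩
  choose N hNspec using hN
  set g₀ : ℕ := max 1 (Finset.univ.sup N) with hg₀
  have hg₀pos : 0 < g₀ := lt_of_lt_of_le one_pos (le_max_left _ _)
  have hpos : ∀ x ∈ H, 0 < mus g₀ x := by
    intro x hx
    exact hNspec x hx g₀ (le_trans (Finset.le_sup (Finset.mem_univ x)) (le_max_right _ _))
  -- the finset of H and the minimum
  set Hfin : Finset G := Finset.univ.filter (fun a => a ∈ H) with hHfin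
  have h1mem : (1 : G) ∈ Hfin := by simp [hHfin, one_mem]
  obtain ⟨b, hbmem, hbmin⟩ := Finset.exists_min_image Hfin (mus g₀) ⟨1, h1mem⟩
  have hbH : b ∈ H := by simpa [hHfin] using hbmem
  set m : ℝ := mus g₀ b with hm
  have hmpos : 0 < m := hpos b hbH
  set eps : ℝ := h * m with heps
  have hepspos : 0 < eps := mul_pos hhpos hmpos
  have hcardHfin : (Hfin.card : ℝ) = h := by
    rw [hh, hHfin]
    norm_cast
    rw [Nat.card_eq_fintype_card, Fintype.card_subtype]
  have heps1 : eps ≤ 1 := by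
    have hsum : ∑ x ∈ Hfin, mus g₀ x = 1 := by
      rw [← sum_mus (G := G) g₀]
      exact Finset.sum_subset (Finset.subset_univ _)
        (fun x _ hx => mus_support g₀ x (by simpa [hHfin] using hx))
    have hle : Hfin.card • m ≤ ∑ x ∈ Hfin, mus g₀ x :=
      Finset.card_nsmul_le_sum Hfin _ m (fun x hx => hbmin x hx)
    rw [hsum, nsmul_eq_mul, hcardHfin] at hle
    exact heps ▸ hle
  have hrhoe : ∀ a ∈ H, eps / h ≤ mus g₀ a := by
    intro a ha
    have : eps / h = m := by rw [heps]; field_simp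
    rw [this]
    exact hbmin a (by simp [hHfin, ha])
  -- main induction
  have main : ∀ k : ℕ, ∀ g : ℕ, k * g₀ ≤ g → ∀ x ∈ H, |mus g x - 1 / h| ≤ (1 - eps) ^ k := by
    intro k
    induction k with
    | zero =>
      intro g _ x hx
      rw [pow_zero]
      have h1 : 0 ≤ mus g x := mus_nonneg g x
      have h2 : mus g x ≤ 1 := mus_le_one g x
      have h3 : 0 < 1 / h := by positivity
      have h4 : 1 / h ≤ 1 := by
        rw [div_le_one hhpos]; exact hh1
      rw [abs_le]
      constructor <;> linarith
    | succ k ih =>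
      intro g hg x hx
      have hgsucc : k * g₀ + g₀ ≤ g := by
        have : (k + 1) * g₀ = k * g₀ + g₀ := by ring
        omega
      have hsplit : g = (g - g₀) + g₀ := by omega
      have hg' : k * g₀ ≤ g - g₀ := by omega
      rw [hsplit, mus_add]
      have := contract H (mus (g - g₀)) (mus g₀) ((1 - eps) ^ k) eps
        (pow_nonneg (by linarith) k)
        (mus_support _) (sum_mus _)
        (fun a ha => ih (g - g₀) hg' a ha)
        (mus_support _) (sum_mus _)
        hrhoe x hx
      calc |conv (mus (g - g₀)) (mus g₀) x - 1 / h| ≤ (1 - eps) * (1 - eps) ^ k := this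
        _ = (1 - eps) ^ (k + 1) := by ring
  -- limit
  have hcount : ∀ g : ℕ,
      (Nat.card {f : Fin g → G × G //
          (List.ofFn fun i => ⁅(f i).1, (f i).2⁆).prod = 1} : ℝ) /
        (Fintype.card G : ℝ) ^ (2 * g) = mus g (1 : G) := fun g => count_lemma g 1
  have hbound : ∀ g : ℕ, ‖mus g (1 : G) - 1 / h‖ ≤ (1 - eps) ^ (g / g₀) := by
    intro g
    rw [Real.norm_eq_abs]
    exact main (g / g₀) g (Nat.div_mul_le_self g g₀) 1 (one_mem H)
  have hdiv : Filter.Tendsto (fun g : ℕ => g / g₀) Filter.atTop Filter.atTop := by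
    refine Filter.tendsto_atTop.2 fun b => Filter.eventually_atTop.2 ⟨b * g₀, fun g hg => ?_⟩
    exact (Nat.le_div_iff_mul_le hg₀pos).2 hg
  have hpow : Filter.Tendsto (fun n : ℕ => (1 - eps) ^ n) Filter.atTop (nhds 0) :=
    tendsto_pow_atTop_nhds_zero_of_lt_one (by linarith) (by linarith)
  have hz : Filter.Tendsto (fun g : ℕ => mus g (1 : G) - 1 / h) Filter.atTop (nhds 0) :=
    squeeze_zero_norm hbound (hpow.comp hdiv)
  have hfinal : Filter.Tendsto (fun g : ℕ => mus g (1 : G)) Filter.atTop (nhds (1 / h)) :=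
    tendsto_sub_nhds_zero_iff.1 hz
  have : (fun g : ℕ =>
      (Nat.card {f : Fin g → G × G //
          (List.ofFn fun i => ⁅(f i).1, (f i).2⁆).prod = 1} : ℝ) /
        (Fintype.card G : ℝ) ^ (2 * g)) = fun g : ℕ => mus g (1 : G) := funext hcount
  rw [this]
  exact hfinal

end SurfaceCount

/-- For a finite group `G`, the number of `2g`-tuples `(A₁,B₁,...,A_g,B_g)` with
`∏ᵢ [Aᵢ,Bᵢ] = 1` (product taken in order), divided by `(#G)^(2g)`, tends to
`1/#[G,G]` as `g → ∞`. -/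
theorem stmt_0 (G : Type*) [Group G] [Fintype G] :
    Filter.Tendsto
      (fun g : ℕ =>
        (Nat.card {f : Fin g → G × G //
            (List.ofFn fun i => ⁅(f i).1, (f i).2⁆).prod = 1} : ℝ) /
          (Fintype.card G : ℝ) ^ (2 * g))
      Filter.atTop (nhds (1 / (Nat.card (commutator G) : ℝ))) :=
  SurfaceCount.main_result
end

section
/- Frobenius's formula: for a finite group G and g ≥ 1, the number of 2g-tuples (A₁,B₁,...,A_g,B_g) ∈ G^{2g} with ∏ᵢ₌₁^g [Aᵢ,Bᵢ] = 1 equals #G · ∑_χ (#G/χ(1))^{2g-2}, where the sum runs over irreducible complex characters χ of G. -/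
open CategoryTheory
open scoped commutatorElement

open CategoryTheory Module LinearMap

set_option linter.unusedSectionVars false
set_option maxRecDepth 4000
noncomputable section
namespace Frob
variable {G : Type} [Group G] [Fintype G]

def subRep {W : Type} [AddCommGroup W] [Module ℂ W] (ρ : Representation ℂ G W)
    (p : Submodule ℂ W) (hp : ∀ g : G, ∀ x ∈ p, ρ g x ∈ p) : Representation ℂ G p where
  toFun g := (ρ g).restrict (fun x hx => hp g x hx)
  map_one' := by ext x; simp [LinearMap.restrict_apply]
  map_mul' g h := by ext x; simp [LinearMap.restrict_apply]

theorem hom_comm_apply {X Y : FDRep ℂ G} (f : X ⟶ Y) (g : G) (x : X) :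
    f.hom (X.ρ g x) = Y.ρ g (f.hom x) :=
  by have h := f.comm g; exact congr(($h).hom.hom x)

theorem simple_of_irreducible {U : Type} [AddCommGroup U] [Module ℂ U]
    [FiniteDimensional ℂ U] [Nontrivial U] (σ : Representation ℂ G U)
    (hmin : ∀ q : Submodule ℂ U, (∀ g : G, ∀ x ∈ q, σ g x ∈ q) → q = ⊥ ∨ q = ⊤) :
    Simple (FDRep.of σ) := by
  constructor
  intro Y f hmono
  constructor
  · intro hiso h0
    obtain ⟨u, hu⟩ := exists_ne (0 : U)
    have h1 : 𝟙 (FDRep.of σ) = 0 := by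
      calc 𝟙 (FDRep.of σ) = inv f ≫ f := (IsIso.inv_hom_id f).symm
        _ = inv f ≫ 0 := congrArg (CategoryStruct.comp (inv f)) h0
        _ = 0 := Limits.comp_zero
    have h2 : (𝟙 (FDRep.of σ) : _ ⟶ _).hom u = ((0 : FDRep.of σ ⟶ FDRep.of σ)).hom u := by
      rw [h1]
    simp only [Action.id_hom, Action.zero_hom] at h2
    exact hu (h2.trans rfl)
  · intro hne
    have hKinv : ∀ g : G, ∀ x ∈ LinearMap.ker f.hom.hom.hom, Y.ρ g x ∈ LinearMap.ker f.hom.hom.hom := by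
      intro g x hx
      rw [LinearMap.mem_ker] at hx ⊢
      exact (hom_comm_apply f g x).trans (by rw [show f.hom x = 0 from hx, map_zero])
    let Z : FDRep ℂ G := FDRep.of (subRep Y.ρ (LinearMap.ker f.hom.hom.hom) hKinv)
    let ι : Z ⟶ Y := ⟨ConcreteCategory.ofHom (LinearMap.ker f.hom.hom.hom).subtype, fun g => rfl⟩
    have hι : ι ≫ f = 0 ≫ f := by
      rw [Limits.zero_comp]
      apply Action.hom_ext
      ext x
      show f.hom ((LinearMap.ker f.hom.hom.hom).subtype x) = (0 : Z →ₗ[ℂ] (FDRep.of σ)) x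
      simp only [LinearMap.zero_apply, Submodule.coe_subtype]
      exact x.2
    have hι0 : ι = 0 := (cancel_mono f).mp hι
    have hsub0 : (LinearMap.ker f.hom.hom.hom).subtype = (0 : Z →ₗ[ℂ] Y) := congrArg (fun φ => φ.hom.hom.hom) hι0
    have hker : LinearMap.ker f.hom.hom.hom = ⊥ := by
      rw [eq_bot_iff]
      intro x hx
      have := LinearMap.congr_fun hsub0 ⟨x, hx⟩
      simpa using this
    have hinj : Function.Injective f.hom := LinearMap.ker_eq_bot.mp hker
    have hRinv : ∀ g : G, ∀ x ∈ LinearMap.range f.hom.hom.hom, σ g x ∈ LinearMap.range f.hom.hom.hom := by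
      rintro g x ⟨y, rfl⟩
      exact ⟨Y.ρ g y, hom_comm_apply f g y⟩
    have hrange : LinearMap.range f.hom.hom.hom = ⊤ := by
      rcases hmin _ hRinv with h | h
      · exact absurd (Action.hom_ext _ _ (InducedCategory.hom_ext (ModuleCat.hom_ext (LinearMap.range_eq_bot.mp h)))) hne
      · exact h
    have hsurj : Function.Surjective f.hom := LinearMap.range_eq_top.mp hrange
    let e := LinearEquiv.ofBijective f.hom.hom.hom ⟨hinj, hsurj⟩
    have : IsIso f.hom := by
      refine ⟨⟨ConcreteCategory.ofHom e.symm.toLinearMap, ?_, ?_⟩⟩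
      · ext x
        exact e.symm_apply_apply x
      · ext x
        exact e.apply_symm_apply x
    infer_instance


theorem char_one_ne_zero (X : FDRep ℂ G) [Simple X] : X.character 1 ≠ 0 := by
  rw [FDRep.char_one]
  have : Nontrivial X := by
    by_contra h
    have hsub : Subsingleton X := not_nontrivial_iff_subsingleton.mp h
    apply CategoryTheory.id_nonzero X
    apply Action.hom_ext
    ext x
    exact @Subsingleton.elim _ hsub _ _
  have : 0 < finrank ℂ X := finrank_pos
  exact_mod_cast this.ne'

/-- Schur: an equivariant endomorphism of a simple `FDRep` is scalar. -/
theorem schur_scalar (X : FDRep ℂ G) [Simple X] (T : X →ₗ[ℂ] X)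
    (hT : ∀ g : G, T ∘ₗ X.ρ g = X.ρ g ∘ₗ T) :
    ∃ c : ℂ, T = c • LinearMap.id ∧
      LinearMap.trace ℂ X T = c * X.character 1 := by
  let φ : X ⟶ X := ⟨ConcreteCategory.ofHom T, fun g => by ext x; exact LinearMap.congr_fun (hT g) x⟩
  have h1 : finrank ℂ (X ⟶ X) = 1 := finrank_endomorphism_simple_eq_one ℂ X
  obtain ⟨c, hc⟩ := (finrank_eq_one_iff_of_nonzero' (𝟙 X) (id_nonzero X)).mp h1 φ
  refine ⟨c, ?_, ?_⟩
  · have : T = (c • 𝟙 X).hom.hom.hom := by rw [hc]; rfl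
    rw [this]
    rfl
  · have hT' : T = c • LinearMap.id := by
      have : T = (c • 𝟙 X).hom.hom.hom := by rw [hc]; rfl
      rw [this]; rfl
    rw [hT']
    simp [LinearMap.trace_id, FDRep.char_one]


theorem char_eq_trace (X : FDRep ℂ G) (g : G) :
    X.character g = LinearMap.trace ℂ X (X.ρ g) := rfl

open scoped Classical in
theorem orth (X Y : FDRep ℂ G) [Simple X] [Simple Y] :
    ∑ t : G, X.character t * Y.character t⁻¹
      = if Nonempty (X ≅ Y) then (Fintype.card G : ℂ) else 0 := by
  letI : Invertible ((Fintype.card G : ℂ)) :=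
    invertibleOfNonzero (by exact_mod_cast Fintype.card_ne_zero)
  have hcne : (Fintype.card G : ℂ) ≠ 0 := by exact_mod_cast Fintype.card_ne_zero
  have h : (Nat.card G : ℂ)⁻¹ * ∑ t : G, X.character t * Y.character t⁻¹
      = if Nonempty (X ≅ Y) then (1 : ℂ) else 0 :=
    FDRep.char_orthonormal X Y
  rw [Nat.card_eq_fintype_card, inv_mul_eq_iff_eq_mul₀ hcne] at h
  rw [h]
  split <;> simp

theorem conv1 (X : FDRep ℂ G) [Simple X] (x y : G) :
    ∑ a : G, X.character (a * x * a⁻¹ * y)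
      = (Fintype.card G : ℂ) / X.character 1 * X.character x * X.character y := by
  classical
  set T : X →ₗ[ℂ] X := ∑ a : G, X.ρ (a * x * a⁻¹) with hTdef
  have hT : ∀ g : G, X.ρ g * T = T * X.ρ g := by
    intro g
    have h1 : X.ρ g * T = ∑ a : G, X.ρ (g * (a * x * a⁻¹)) := by
      rw [hTdef, Finset.mul_sum]
      exact Finset.sum_congr rfl fun a _ => (map_mul X.ρ _ _).symm
    have h2 : T * X.ρ g = ∑ a : G, X.ρ (a * x * a⁻¹ * g) := by
      rw [hTdef, Finset.sum_mul]
      exact Finset.sum_congr rfl fun a _ => (map_mul X.ρ _ _).symm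
    rw [h1, h2, ← Equiv.sum_comp (Equiv.mulLeft g) (fun a => X.ρ (a * x * a⁻¹ * g))]
    apply Finset.sum_congr rfl
    intro a _
    congr 1
    simp only [Equiv.coe_mulLeft]
    group
  have htr : LinearMap.trace ℂ X T = (Fintype.card G : ℂ) * X.character x := by
    rw [hTdef, map_sum]
    have : ∀ a : G, LinearMap.trace ℂ X (X.ρ (a * x * a⁻¹)) = X.character x := by
      intro a
      rw [← char_eq_trace, FDRep.char_conj]
    rw [Finset.sum_congr rfl fun a _ => this a, Finset.sum_const, Finset.card_univ,
      nsmul_eq_mul]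
  obtain ⟨c, hc, htc⟩ := schur_scalar X T (fun g => (hT g).symm)
  have hcval : c = (Fintype.card G : ℂ) * X.character x / X.character 1 := by
    rw [htr] at htc
    rw [eq_div_iff (char_one_ne_zero X)]
    linear_combination htc.symm
  have key : ∀ a : G, X.character (a * x * a⁻¹ * y)
      = LinearMap.trace ℂ X ((X.ρ (a * x * a⁻¹)) * X.ρ y) := by
    intro a
    rw [← map_mul, ← char_eq_trace]
  rw [Finset.sum_congr rfl fun a _ => key a, ← map_sum, ← Finset.sum_mul, ← hTdef, hc,
    smul_mul_assoc, Module.End.mul_eq_comp, LinearMap.id_comp, map_smul, smul_eq_mul,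
    ← char_eq_trace, hcval]
  field_simp


theorem conv2 (X : FDRep ℂ G) [Simple X] (y : G) :
    ∑ b : G, X.character b * X.character (b⁻¹ * y)
      = (Fintype.card G : ℂ) / X.character 1 * X.character y := by
  classical
  set T : X →ₗ[ℂ] X := ∑ b : G, X.character b • X.ρ b⁻¹ with hTdef
  have hT : ∀ g : G, X.ρ g * T = T * X.ρ g := by
    intro g
    have h1 : X.ρ g * T = ∑ b : G, X.character b • X.ρ (g * b⁻¹) := by
      rw [hTdef, Finset.mul_sum]
      exact Finset.sum_congr rfl fun b _ => by
        rw [mul_smul_comm, ← map_mul]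
    have h2 : T * X.ρ g = ∑ b : G, X.character b • X.ρ (b⁻¹ * g) := by
      rw [hTdef, Finset.sum_mul]
      exact Finset.sum_congr rfl fun b _ => by
        rw [smul_mul_assoc, ← map_mul]
    rw [h1, h2,
      ← Equiv.sum_comp ((Equiv.mulLeft g).trans (Equiv.mulRight g⁻¹))
        (fun b => X.character b • X.ρ (b⁻¹ * g))]
    apply Finset.sum_congr rfl
    intro b _
    have hb : ((Equiv.mulLeft g).trans (Equiv.mulRight g⁻¹)) b = g * b * g⁻¹ := rfl
    rw [hb]
    have h3 : X.character (g * b * g⁻¹) = X.character b := FDRep.char_conj X b g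
    rw [h3]
    congr 2
    group
  have htr : LinearMap.trace ℂ X T = (Fintype.card G : ℂ) := by
    rw [hTdef, map_sum]
    have : ∀ b : G, LinearMap.trace ℂ X (X.character b • X.ρ b⁻¹)
        = X.character b * X.character b⁻¹ := by
      intro b
      rw [map_smul, smul_eq_mul, ← char_eq_trace]
    rw [Finset.sum_congr rfl fun b _ => this b, orth X X]
    simp
  obtain ⟨c, hc, htc⟩ := schur_scalar X T (fun g => (hT g).symm)
  have hcval : c = (Fintype.card G : ℂ) / X.character 1 := by
    rw [htr] at htc
    rw [eq_div_iff (char_one_ne_zero X)]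
    linear_combination htc.symm
  have key : ∀ b : G, X.character b * X.character (b⁻¹ * y)
      = LinearMap.trace ℂ X ((X.character b • X.ρ b⁻¹) * X.ρ y) := by
    intro b
    rw [smul_mul_assoc, map_smul, smul_eq_mul, ← map_mul, ← char_eq_trace]
  rw [Finset.sum_congr rfl fun b _ => key b, ← map_sum, ← Finset.sum_mul, ← hTdef, hc,
    smul_mul_assoc, Module.End.mul_eq_comp, LinearMap.id_comp, map_smul, smul_eq_mul,
    ← char_eq_trace, hcval]

theorem comm_step (X : FDRep ℂ G) [Simple X] (y : G) :
    ∑ p : G × G, X.character (⁅p.1, p.2⁆ * y)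
      = ((Fintype.card G : ℂ) / X.character 1) ^ 2 * X.character y := by
  classical
  rw [Fintype.sum_prod_type_right]
  have inner : ∀ b : G, ∑ a : G, X.character (⁅a, b⁆ * y)
      = (Fintype.card G : ℂ) / X.character 1 * X.character b * X.character (b⁻¹ * y) := by
    intro b
    rw [← conv1 X b (b⁻¹ * y)]
    apply Finset.sum_congr rfl
    intro a _
    congr 1
    rw [commutatorElement_def]
    group
  rw [Finset.sum_congr rfl fun b _ => inner b]
  rw [Finset.sum_congr rfl fun b _ => mul_assoc _ _ _, ← Finset.mul_sum, conv2 X y]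
  ring


theorem iter_comm (X : FDRep ℂ G) [Simple X] (n : ℕ) (y : G) :
    ∑ f : Fin n → G × G,
        X.character ((List.ofFn fun i => ⁅(f i).1, (f i).2⁆).prod * y)
      = ((Fintype.card G : ℂ) / X.character 1) ^ (2 * n) * X.character y := by
  classical
  induction n generalizing y with
  | zero =>
      simp
  | succ n ih =>
      rw [← Equiv.sum_comp (Fin.consEquiv (fun _ => G × G))
        (fun f : Fin (n+1) → G × G =>
          X.character ((List.ofFn fun i => ⁅(f i).1, (f i).2⁆).prod * y))]
      have step : ∀ pf : (G × G) × (Fin n → G × G),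
          X.character ((List.ofFn fun i =>
              ⁅(((Fin.consEquiv (fun _ => G × G)) pf) i).1,
               (((Fin.consEquiv (fun _ => G × G)) pf) i).2⁆).prod * y)
            = X.character (⁅pf.1.1, pf.1.2⁆ *
                ((List.ofFn fun i => ⁅(pf.2 i).1, (pf.2 i).2⁆).prod * y)) := by
        rintro ⟨p, f⟩
        congr 1
        rw [List.ofFn_succ]
        simp only [Fin.consEquiv_apply, Fin.cons_zero, Fin.cons_succ, List.prod_cons]
        rw [mul_assoc]
      rw [Finset.sum_congr rfl fun pf _ => step pf]
      rw [Fintype.sum_prod_type_right]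
      have inner : ∀ f : Fin n → G × G,
          ∑ p : G × G, X.character (⁅p.1, p.2⁆ *
              ((List.ofFn fun i => ⁅(f i).1, (f i).2⁆).prod * y))
            = ((Fintype.card G : ℂ) / X.character 1) ^ 2 *
              X.character ((List.ofFn fun i => ⁅(f i).1, (f i).2⁆).prod * y) :=
        fun f => comm_step X _
      rw [Finset.sum_congr rfl fun f _ => inner f, ← Finset.mul_sum, ih y]
      rw [← mul_assoc, ← pow_add]
      ring_nf


section Decomp

variable {U : Type} [AddCommGroup U] [Module ℂ U] [FiniteDimensional ℂ U]

theorem trace_eq_of_isCompl (f : U →ₗ[ℂ] U) (p q : Submodule ℂ U) (h : IsCompl p q)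
    (hp : Set.MapsTo f p p) (hq : Set.MapsTo f q q) :
    LinearMap.trace ℂ U f
      = LinearMap.trace ℂ p (f.restrict hp) + LinearMap.trace ℂ q (f.restrict hq) := by
  classical
  let N : Bool → Submodule ℂ U := fun b => bif b then p else q
  have hN : DirectSum.IsInternal N := by
    rw [DirectSum.isInternal_submodule_iff_isCompl N (i := true) (j := false)
      (by simp) (by ext b; cases b <;> simp)]
    exact h
  have hmap : ∀ b : Bool, Set.MapsTo f (N b) (N b) := by
    intro b; cases b
    · exact hq
    · exact hp
  rw [LinearMap.trace_eq_sum_trace_restrict hN hmap, Fintype.sum_bool]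
  rfl

theorem exists_invariant_compl (σ : Representation ℂ G U) (p : Submodule ℂ U)
    (hp : ∀ g : G, ∀ x ∈ p, σ g x ∈ p) :
    ∃ q : Submodule ℂ U, (∀ g : G, ∀ x ∈ q, σ g x ∈ q) ∧ IsCompl p q := by
  classical
  obtain ⟨q₀, hq₀⟩ := Submodule.exists_isCompl p
  let π₀ : U →ₗ[ℂ] U := p.subtype ∘ₗ p.projectionOnto q₀ hq₀
  have hπ₀mem : ∀ x : U, π₀ x ∈ p := fun x => (p.projectionOnto q₀ hq₀ x).2
  have hπ₀id : ∀ x ∈ p, π₀ x = x := by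
    intro x hx
    simp [π₀, Submodule.projectionOnto_apply_left hq₀ ⟨x, hx⟩]
  set T : U →ₗ[ℂ] U :=
    (Fintype.card G : ℂ)⁻¹ • ∑ g : G, (σ g) ∘ₗ π₀ ∘ₗ (σ g⁻¹) with hTdef
  have hcne : (Fintype.card G : ℂ) ≠ 0 := by exact_mod_cast Fintype.card_ne_zero
  have hTmem : ∀ x : U, T x ∈ p := by
    intro x
    rw [hTdef]
    simp only [LinearMap.smul_apply, LinearMap.sum_apply, LinearMap.comp_apply]
    exact Submodule.smul_mem _ _ (Submodule.sum_mem _ fun g _ => hp g _ (hπ₀mem _))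
  have hTid : ∀ x ∈ p, T x = x := by
    intro x hx
    rw [hTdef]
    simp only [LinearMap.smul_apply, LinearMap.sum_apply, LinearMap.comp_apply]
    have : ∀ g : G, σ g (π₀ (σ g⁻¹ x)) = x := by
      intro g
      rw [hπ₀id _ (hp g⁻¹ x hx), ← Module.End.mul_apply, ← map_mul, mul_inv_cancel, map_one,
        Module.End.one_apply]
    rw [Finset.sum_congr rfl fun g _ => this g, Finset.sum_const, Finset.card_univ,
      ← Nat.cast_smul_eq_nsmul ℂ, smul_smul, inv_mul_cancel₀ hcne, one_smul]
  have hTcomm : ∀ g : G, T ∘ₗ σ g = σ g ∘ₗ T := by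
    intro g
    show T * σ g = σ g * T
    have expand : ∀ h : G, ((σ h) ∘ₗ π₀ ∘ₗ (σ h⁻¹)) * σ g
        = (σ h) ∘ₗ π₀ ∘ₗ (σ (h⁻¹ * g)) := by
      intro h
      ext x
      simp only [Module.End.mul_apply, LinearMap.comp_apply]
      rw [← Module.End.mul_apply (σ h⁻¹), ← map_mul]
    have expand2 : ∀ h : G, σ g * ((σ h) ∘ₗ π₀ ∘ₗ (σ h⁻¹))
        = (σ (g * h)) ∘ₗ π₀ ∘ₗ (σ h⁻¹) := by
      intro h
      ext x
      simp only [Module.End.mul_apply, LinearMap.comp_apply]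
      rw [← Module.End.mul_apply (σ g) _ (π₀ ((σ h⁻¹) x)), ← map_mul]
    rw [hTdef, smul_mul_assoc, mul_smul_comm]
    congr 1
    rw [Finset.sum_mul, Finset.mul_sum]
    rw [Finset.sum_congr rfl fun h _ => expand h,
      Finset.sum_congr rfl fun h _ => expand2 h]
    rw [← Equiv.sum_comp (Equiv.mulLeft g) (fun h => (σ h) ∘ₗ π₀ ∘ₗ (σ (h⁻¹ * g)))]
    apply Finset.sum_congr rfl
    intro h _
    simp only [Equiv.coe_mulLeft]
    congr 2
    · group
  refine ⟨LinearMap.ker T, ?_, ?_⟩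
  · intro g x hx
    rw [LinearMap.mem_ker] at hx ⊢
    rw [← LinearMap.comp_apply, hTcomm g, LinearMap.comp_apply, hx, map_zero]
  · constructor
    · rw [disjoint_iff]
      rw [eq_bot_iff]
      rintro x ⟨hx1, hx2⟩
      have := hTid x hx1
      rw [LinearMap.mem_ker.mp hx2] at this
      simp [← this]
    · rw [codisjoint_iff, eq_top_iff]
      intro x _
      have h1 : T x ∈ p := hTmem x
      have h2 : x - T x ∈ LinearMap.ker T := by
        rw [LinearMap.mem_ker, map_sub, hTid _ (hTmem x), sub_self]
      have : x = T x + (x - T x) := by abel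
      rw [this]
      exact Submodule.add_mem_sup h1 h2


theorem char_decomp_aux {ι : Type} [Fintype ι] (V : ι → FDRep ℂ G)
    (hcomplete : ∀ W : FDRep ℂ G, Simple W → ∃ i, Nonempty (W ≅ V i)) :
    ∀ n : ℕ, ∀ (U : Type) [AddCommGroup U] [Module ℂ U] [FiniteDimensional ℂ U]
      (σ : Representation ℂ G U), finrank ℂ U ≤ n →
      ∃ c : ι → ℕ, ∀ x : G,
        LinearMap.trace ℂ U (σ x) = ∑ i, (c i : ℂ) * (V i).character x := by
  intro n
  induction n with
  | zero =>
      intro U _ _ _ σ hle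
      refine ⟨fun _ => 0, fun x => ?_⟩
      haveI hU : Subsingleton U :=
        Module.finrank_zero_iff.mp (Nat.le_zero.mp hle)
      have : σ x = 0 := LinearMap.ext fun u => Subsingleton.elim _ _
      rw [this, map_zero]
      simp
  | succ n ih =>
      intro U _ _ _ σ hle
      by_cases hn : finrank ℂ U ≤ n
      · exact ih U σ hn
      have hfr : 0 < finrank ℂ U := by omega
      haveI : Nontrivial U := Module.finrank_pos_iff.mp hfr
      classical
      set s : Set ℕ := {m | ∃ p : Submodule ℂ U,
        (∀ g : G, ∀ x ∈ p, σ g x ∈ p) ∧ p ≠ ⊥ ∧ finrank ℂ p = m} with hsdef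
      have hs : s.Nonempty :=
        ⟨finrank ℂ (⊤ : Submodule ℂ U), ⊤, fun g x _ => Submodule.mem_top,
          Ne.symm bot_ne_top, rfl⟩
      obtain ⟨p, hpinv, hpne, hpfr⟩ := Nat.sInf_mem hs
      haveI : Nontrivial p := Submodule.nontrivial_iff_ne_bot.mpr hpne
      have hsimplemod : ∀ q : Submodule ℂ p,
          (∀ g : G, ∀ x ∈ q, (subRep σ p hpinv) g x ∈ q) → q = ⊥ ∨ q = ⊤ := by
        intro q hq
        by_cases hqbot : q = ⊥
        · exact Or.inl hqbot
        refine Or.inr ?_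
        have hq'inv : ∀ g : G, ∀ x ∈ q.map p.subtype, σ g x ∈ q.map p.subtype := by
          rintro g x ⟨y, hy, rfl⟩
          exact ⟨(subRep σ p hpinv) g y, hq g y hy, rfl⟩
        have hq'ne : q.map p.subtype ≠ ⊥ := by
          intro h
          apply hqbot
          rw [eq_bot_iff]
          intro y hy
          have hmem : (y : U) ∈ q.map p.subtype := ⟨y, hy, rfl⟩
          rw [h, Submodule.mem_bot] at hmem
          rw [Submodule.mem_bot]
          exact Subtype.ext hmem
        have h1 : sInf s ≤ finrank ℂ (q.map p.subtype) :=
          Nat.sInf_le ⟨_, hq'inv, hq'ne, rfl⟩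
        have h2 : finrank ℂ (q.map p.subtype) = finrank ℂ q :=
          Submodule.finrank_map_subtype_eq p q
        have h3 : finrank ℂ q ≤ finrank ℂ p := q.finrank_le
        have h4 : finrank ℂ q = finrank ℂ p := by omega
        exact Submodule.eq_top_of_finrank_eq h4
      haveI hsimp : Simple (FDRep.of (subRep σ p hpinv)) :=
        simple_of_irreducible _ hsimplemod
      obtain ⟨i₀, ⟨iso⟩⟩ := hcomplete _ hsimp
      have hchar : ∀ x : G,
          LinearMap.trace ℂ p ((subRep σ p hpinv) x) = (V i₀).character x := by
        intro x
        calc LinearMap.trace ℂ p ((subRep σ p hpinv) x)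
            = (FDRep.of (subRep σ p hpinv)).character x := rfl
          _ = (V i₀).character x := by rw [FDRep.char_iso iso]
      obtain ⟨q, hqinv, hcompl⟩ := exists_invariant_compl σ p hpinv
      have hsum : finrank ℂ p + finrank ℂ q = finrank ℂ U :=
        Submodule.finrank_add_eq_of_isCompl hcompl
      have hppos : 0 < finrank ℂ p := finrank_pos
      have hqle : finrank ℂ q ≤ n := by omega
      obtain ⟨c', hc'⟩ := ih q (subRep σ q hqinv) hqle
      refine ⟨fun i => (if i = i₀ then 1 else 0) + c' i, fun x => ?_⟩
      have hmp : Set.MapsTo (σ x) p p := fun u hu => hpinv x u hu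
      have hmq : Set.MapsTo (σ x) q q := fun u hu => hqinv x u hu
      rw [trace_eq_of_isCompl (σ x) p q hcompl hmp hmq]
      have e1 : (σ x).restrict hmp = (subRep σ p hpinv) x := rfl
      have e2 : (σ x).restrict hmq = (subRep σ q hqinv) x := rfl
      rw [e1, e2, hchar x, hc' x]
      have hterm : ∀ i : ι, (((if i = i₀ then 1 else 0) + c' i : ℕ) : ℂ) * (V i).character x
          = (if i = i₀ then (V i).character x else 0) + (c' i : ℂ) * (V i).character x := by
        intro i
        by_cases h : i = i₀
        · rw [if_pos h, if_pos h]
          push_cast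
          ring
        · rw [if_neg h, if_neg h]
          push_cast
          ring
      rw [Finset.sum_congr rfl fun i _ => hterm i, Finset.sum_add_distrib,
        Finset.sum_ite_eq' Finset.univ i₀ (fun i => (V i).character x)]
      simp

end Decomp


/-- The left regular representation on `G → ℂ`. -/
def reg : Representation ℂ G (G → ℂ) where
  toFun x := LinearMap.funLeft ℂ ℂ fun h => x⁻¹ * h
  map_one' := by
    ext f h
    simp [LinearMap.funLeft]
  map_mul' x y := by
    ext f h
    simp [LinearMap.funLeft, mul_assoc]

open scoped Classical in
theorem trace_reg (x : G) :
    LinearMap.trace ℂ (G → ℂ) (reg (G := G) x)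
      = if x = 1 then (Fintype.card G : ℂ) else 0 := by
  classical
  rw [LinearMap.trace_eq_matrix_trace ℂ (Pi.basisFun ℂ G), Matrix.trace]
  have hdiag : ∀ h : G, (LinearMap.toMatrix (Pi.basisFun ℂ G) (Pi.basisFun ℂ G)
      (reg (G := G) x)).diag h = if x = 1 then 1 else 0 := by
    intro h
    rw [Matrix.diag_apply, LinearMap.toMatrix_apply]
    have : (reg (G := G) x) ((Pi.basisFun ℂ G) h) = fun h' => if x⁻¹ * h' = h then 1 else 0 := by
      ext h'
      simp [reg, LinearMap.funLeft, Pi.basisFun_apply, Pi.single_apply]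
    rw [this]
    simp only [Pi.basisFun_repr]
    have hiff : (x⁻¹ * h = h) ↔ x = 1 := by
      constructor
      · intro hh
        have h1 : x⁻¹ = 1 := mul_right_cancel (b := h) (by simpa using hh)
        exact inv_eq_one.mp h1
      · intro hh; simp [hh]
    by_cases hx : x = 1
    · rw [if_pos (hiff.mpr hx), if_pos hx]
    · rw [if_neg (fun c => hx (hiff.mp c)), if_neg hx]
  rw [Finset.sum_congr rfl fun h _ => hdiag h]
  by_cases hx : x = 1 <;> simp [hx, Finset.card_univ]

open scoped Classical in
theorem second_orth {ι : Type} [Fintype ι] (V : ι → FDRep ℂ G)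
    (hsimple : ∀ i, Simple (V i))
    (hdistinct : ∀ i j, Nonempty (V i ≅ V j) → i = j)
    (hcomplete : ∀ W : FDRep ℂ G, Simple W → ∃ i, Nonempty (W ≅ V i)) (x : G) :
    ∑ i, (V i).character 1 * (V i).character x
      = if x = 1 then (Fintype.card G : ℂ) else 0 := by
  classical
  haveI := fun i => hsimple i
  obtain ⟨c, hc⟩ := char_decomp_aux V hcomplete (finrank ℂ (G → ℂ)) (G → ℂ) reg le_rfl
  have horth : ∀ i j : ι, ∑ t : G, (V i).character t * (V j).character t⁻¹
      = if i = j then (Fintype.card G : ℂ) else 0 := by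
    intro i j
    rw [orth (V i) (V j)]
    by_cases hij : i = j
    · rw [if_pos (hij ▸ (⟨Iso.refl (V i)⟩ : Nonempty (V i ≅ V i))), if_pos hij]
    · rw [if_neg (fun hn => hij (hdistinct i j hn)), if_neg hij]
  have hcne : (Fintype.card G : ℂ) ≠ 0 := by exact_mod_cast Fintype.card_ne_zero
  have hcval : ∀ j, (c j : ℂ) = (V j).character 1 := by
    intro j
    have e1 : (∑ t : G, (if t = (1:G) then (Fintype.card G : ℂ) else 0) * (V j).character t⁻¹)
        = (Fintype.card G : ℂ) * (V j).character 1 := by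
      simp [ite_mul, Finset.sum_ite_eq']
    have e2 : ∑ t : G, (∑ i, (c i : ℂ) * (V i).character t) * (V j).character t⁻¹
        = (c j : ℂ) * (Fintype.card G : ℂ) := by
      rw [Finset.sum_congr rfl fun t (_ : t ∈ Finset.univ) =>
        Finset.sum_mul Finset.univ (fun i => (c i : ℂ) * (V i).character t)
          ((V j).character t⁻¹)]
      rw [Finset.sum_comm]
      have hin : ∀ i, ∑ t : G, (c i : ℂ) * (V i).character t * (V j).character t⁻¹
          = (c i : ℂ) * (if i = j then (Fintype.card G : ℂ) else 0) := by
        intro i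
        rw [← horth i j, Finset.mul_sum]
        exact Finset.sum_congr rfl fun t _ => by ring
      rw [Finset.sum_congr rfl fun i _ => hin i]
      simp [mul_ite, Finset.sum_ite_eq', mul_comm]
    have e0 : (∑ t : G, (if t = (1:G) then (Fintype.card G : ℂ) else 0) * (V j).character t⁻¹)
        = ∑ t : G, (∑ i, (c i : ℂ) * (V i).character t) * (V j).character t⁻¹ :=
      Finset.sum_congr rfl fun t _ => by rw [← hc t, trace_reg t]
    have key : (Fintype.card G : ℂ) * (V j).character 1 = (c j : ℂ) * (Fintype.card G : ℂ) := by
      rw [← e1, e0, e2]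
    have := mul_left_cancel₀ hcne (key.trans (mul_comm (c j : ℂ) (Fintype.card G : ℂ)))
    exact this.symm
  have final : LinearMap.trace ℂ (G → ℂ) (reg (G := G) x)
      = ∑ i, (V i).character 1 * (V i).character x := by
    rw [hc x]
    exact Finset.sum_congr rfl fun i _ => by rw [hcval i]
  exact final.symm.trans (trace_reg x)

end Frob


open Frob in
/-- Frobenius's formula: for a finite group `G` and `g ≥ 1`, the number of tuples
`(A₁,B₁,...,A_g,B_g) ∈ G^{2g}` with `∏ᵢ [Aᵢ,Bᵢ] = 1` equals
`#G · ∑_χ (#G/χ(1))^{2g-2}`, the sum running over the irreducible complex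
characters of `G` (here indexed by a complete family of pairwise non-isomorphic
simple finite-dimensional complex representations). -/
theorem stmt_1 (G : Type) [Group G] [Fintype G] (g : ℕ) (hg : 1 ≤ g)
    (ι : Type) [Fintype ι] (V : ι → FDRep ℂ G)
    (hsimple : ∀ i, Simple (V i))
    (hdistinct : ∀ i j, Nonempty (V i ≅ V j) → i = j)
    (hcomplete : ∀ W : FDRep ℂ G, Simple W → ∃ i, Nonempty (W ≅ V i)) :
    (Nat.card {f : Fin g → G × G //
        (List.ofFn fun i => ⁅(f i).1, (f i).2⁆).prod = 1} : ℂ) =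
      (Fintype.card G : ℂ) *
        ∑ i, ((Fintype.card G : ℂ) / (V i).character 1) ^ (2 * g - 2) := by
  classical
  haveI := hsimple
  set P : (Fin g → G × G) → G := fun f => (List.ofFn fun i => ⁅(f i).1, (f i).2⁆).prod with hP
  have hcne : (Fintype.card G : ℂ) ≠ 0 := by exact_mod_cast Fintype.card_ne_zero
  have hN : ((Nat.card {f : Fin g → G × G // P f = 1} : ℕ) : ℂ)
      = ∑ f : Fin g → G × G, if P f = 1 then (1 : ℂ) else 0 := by
    rw [Finset.sum_boole, Nat.card_eq_fintype_card, Fintype.card_subtype]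
  have key : (Fintype.card G : ℂ) * ((Nat.card {f : Fin g → G × G // P f = 1} : ℕ) : ℂ)
      = (Fintype.card G : ℂ) * ((Fintype.card G : ℂ) *
          ∑ i, ((Fintype.card G : ℂ) / (V i).character 1) ^ (2 * g - 2)) := by
    rw [hN, Finset.mul_sum]
    have h1 : ∀ f : Fin g → G × G,
        (Fintype.card G : ℂ) * (if P f = 1 then (1 : ℂ) else 0)
          = ∑ i, (V i).character 1 * (V i).character (P f) := by
      intro f
      rw [second_orth V hsimple hdistinct hcomplete (P f)]
      by_cases h : P f = 1 <;> simp [h]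
    rw [Finset.sum_congr rfl fun f _ => h1 f, Finset.sum_comm]
    have h2 : ∀ i, ∑ f : Fin g → G × G, (V i).character 1 * (V i).character (P f)
        = (V i).character 1 *
            (((Fintype.card G : ℂ) / (V i).character 1) ^ (2 * g) * (V i).character 1) := by
      intro i
      rw [← Finset.mul_sum]
      congr 1
      rw [← iter_comm (V i) g 1]
      exact Finset.sum_congr rfl fun f _ => by rw [mul_one]
    rw [Finset.sum_congr rfl fun i _ => h2 i, Finset.mul_sum, Finset.mul_sum]
    apply Finset.sum_congr rfl
    intro i _
    have hχ : (V i).character 1 ≠ 0 := char_one_ne_zero (V i)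
    have hpow : ((Fintype.card G : ℂ) / (V i).character 1) ^ (2 * g)
        = ((Fintype.card G : ℂ) / (V i).character 1) ^ (2 * g - 2) *
          ((Fintype.card G : ℂ) / (V i).character 1) ^ 2 := by
      rw [← pow_add]
      congr 1
      omega
    rw [hpow]
    have hD : (V i).character 1 *
        (((Fintype.card G : ℂ) / (V i).character 1) ^ 2 * (V i).character 1)
          = (Fintype.card G : ℂ) ^ 2 := by
      rw [div_pow]
      field_simp
    linear_combination (((Fintype.card G : ℂ) / (V i).character 1) ^ (2 * g - 2)) * hD
  exact mul_left_cancel₀ hcne key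
end
end

section
/- Let f(q) = ∑_{i=0}^s aᵢ qⁱ ∈ ℤ[q] with a_s ≠ 0. Over a finite field F_q, if X is a variety with #X(F_q) = f(q) for all q, the coefficients of the power series Z(t) = ∏_{i=0}^s (1 - qⁱt)^{-aᵢ} give #Sym^n X(F_q). Formally: the sequence (coefficient of tⁿ in Z(t))/q^{ns} converges (coefficientwise in powers of q^{-1}) as n → ∞ if and only if a_s = 1. -/
/-- The variable `u = q⁻¹` in the field of Laurent series `ℚ((u))`. -/
noncomputable def uu : LaurentSeries ℚ := HahnSeries.single (1 : ℤ) (1 : ℚ)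

/-- `q = u⁻¹` as a Laurent series in `u = q⁻¹`. -/
noncomputable def qq : LaurentSeries ℚ := uu⁻¹

/-- Integer powers of a power series over a field (using the partial inverse of
power series for negative exponents). -/
noncomputable def zp (f : PowerSeries (LaurentSeries ℚ)) (z : ℤ) :
    PowerSeries (LaurentSeries ℚ) :=
  f ^ z.toNat * f⁻¹ ^ (-z).toNat

/-- The zeta-type series `Z(t) = ∏_{i=0}^{s} (1 - qⁱ t)^{-aᵢ}`. -/
noncomputable def Zser (s : ℕ) (a : ℕ → ℤ) : PowerSeries (LaurentSeries ℚ) :=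
  ∏ i ∈ Finset.range (s + 1),
    zp (1 - PowerSeries.C (qq ^ i) * PowerSeries.X) (-(a i))

/-- `c_n` : the coefficient of `tⁿ` in `Z(t)`. -/
noncomputable def cser (s : ℕ) (a : ℕ → ℤ) (n : ℕ) : LaurentSeries ℚ :=
  PowerSeries.coeff n (Zser s a)

noncomputable abbrev ff (i : ℕ) : PowerSeries (LaurentSeries ℚ) :=
  1 - PowerSeries.C (qq ^ i) * PowerSeries.X

/-- the geometric series `∑ q^{ik} t^k`. -/
noncomputable def gg (i : ℕ) : PowerSeries (LaurentSeries ℚ) :=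
  PowerSeries.mk fun k => qq ^ (i * k)

lemma constantCoeff_ff (i : ℕ) :
    PowerSeries.constantCoeff (ff i) = 1 := by
  simp [ff]

lemma ff_inv (i : ℕ) : (ff i)⁻¹ = gg i := by
  rw [PowerSeries.inv_eq_iff_mul_eq_one (by rw [constantCoeff_ff]; exact one_ne_zero)]
  apply PowerSeries.ext
  intro n
  rw [PowerSeries.coeff_one]
  cases n with
  | zero => simp [gg, ff]
  | succ m =>
    rw [if_neg (Nat.succ_ne_zero m)]
    rw [mul_sub, mul_one, mul_comm (gg i)]
    simp only [map_sub]
    rw [mul_assoc, PowerSeries.coeff_C_mul, PowerSeries.coeff_succ_X_mul]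
    simp only [gg, PowerSeries.coeff_mk]
    rw [← pow_add, sub_eq_zero]
    ring_nf

lemma uu_pow (m : ℕ) : uu ^ m = HahnSeries.single (m : ℤ) (1 : ℚ) := by
  rw [uu, HahnSeries.single_pow]; simp

lemma qq_eq : qq = HahnSeries.single (-1 : ℤ) (1 : ℚ) := by
  rw [qq, uu]
  apply inv_eq_of_mul_eq_one_right
  rw [HahnSeries.single_mul_single]
  simp

lemma qq_pow (m : ℕ) : qq ^ m = HahnSeries.single (-(m : ℤ)) (1 : ℚ) := by
  rw [qq_eq, HahnSeries.single_pow]; simp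

lemma coeff_gg (i k : ℕ) :
    PowerSeries.coeff k (gg i) =
      HahnSeries.single (-((i : ℤ) * k)) (1 : ℚ) := by
  rw [gg, PowerSeries.coeff_mk, qq_pow]
  norm_num

lemma mul_coeff_eq_zero {x y : LaurentSeries ℚ} {A B d : ℤ}
    (hx : ∀ e, e < A → x.coeff e = 0) (hy : ∀ e, e < B → y.coeff e = 0)
    (hd : d < A + B) : (x * y).coeff d = 0 := by
  rw [HahnSeries.coeff_mul]
  apply Finset.sum_eq_zero
  intro ij hij
  rw [Finset.mem_addAntidiagonal] at hij
  obtain ⟨h1, h2, h3⟩ := hij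
  by_cases hA : ij.1 < A
  · exact absurd (hx _ hA) h1
  by_cases hB : ij.2 < B
  · exact absurd (hy _ hB) h2
  omega

/-- support lower bound predicate: each `t^k`-coefficient has `u`-valuation `≥ -(j*k)`. -/
def SGE (j : ℤ) (P : PowerSeries (LaurentSeries ℚ)) : Prop :=
  ∀ k : ℕ, ∀ d : ℤ, d < -(j * k) → (PowerSeries.coeff k P).coeff d = 0

lemma SGE_one (j : ℤ) : SGE j 1 := by
  intro k d hd
  rw [PowerSeries.coeff_one]
  split
  · subst ‹k = 0›
    simp only [Nat.cast_zero, mul_zero, neg_zero] at hd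
    exact HahnSeries.coeff_eq_zero_of_lt_order (by simpa using hd)
  · simp

lemma SGE_mono {j j' : ℤ} (h : j ≤ j') {P : PowerSeries (LaurentSeries ℚ)}
    (hP : SGE j P) : SGE j' P := by
  intro k d hd
  exact hP k d (lt_of_lt_of_le hd (by
    have : j * k ≤ j' * k := mul_le_mul_of_nonneg_right h (by positivity)
    omega))

lemma SGE_mul {j : ℤ} {P Q : PowerSeries (LaurentSeries ℚ)}
    (hP : SGE j P) (hQ : SGE j Q) : SGE j (P * Q) := by
  intro k d hd
  rw [PowerSeries.coeff_mul]
  have : (∑ p ∈ Finset.HasAntidiagonal.antidiagonal k,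
      (PowerSeries.coeff p.1) P *
        (PowerSeries.coeff p.2) Q).coeff d =
      ∑ p ∈ Finset.HasAntidiagonal.antidiagonal k,
        ((PowerSeries.coeff p.1) P *
          (PowerSeries.coeff p.2) Q).coeff d :=
    map_sum (HahnSeries.coeff.addMonoidHom d) _ _
  rw [this]
  apply Finset.sum_eq_zero
  intro ij hij
  rw [Finset.HasAntidiagonal.mem_antidiagonal] at hij
  refine mul_coeff_eq_zero (A := -(j * ij.1)) (B := -(j * ij.2))
    (fun e he => hP _ _ he) (fun e he => hQ _ _ he) ?_
  have h2 : j * (ij.1:ℤ) + j * ij.2 = j * k := by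
    rw [← mul_add]
    congr 1
    exact_mod_cast congrArg Nat.cast hij
  linarith

lemma SGE_pow {j : ℤ} {P : PowerSeries (LaurentSeries ℚ)} (hP : SGE j P) (t : ℕ) :
    SGE j (P ^ t) := by
  induction t with
  | zero => simpa using SGE_one j
  | succ m ih => rw [pow_succ]; exact SGE_mul ih hP

lemma SGE_gg (i : ℕ) : SGE (i : ℤ) (gg i) := by
  intro k d hd
  rw [coeff_gg]
  exact HahnSeries.coeff_single_of_ne (by omega)

lemma coeff_ff (i k : ℕ) :
    PowerSeries.coeff k (ff i) =
      if k = 0 then 1 else if k = 1 then HahnSeries.single (-(i : ℤ)) (-1 : ℚ) else 0 := by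
  simp only [ff, map_sub, PowerSeries.coeff_one, PowerSeries.coeff_C_mul,
    PowerSeries.coeff_X, qq_pow]
  rcases Nat.lt_or_ge k 2 with hk | hk
  · interval_cases k <;> simp
  · rw [if_neg (by omega), if_neg (by omega), if_neg (by omega), if_neg (by omega)]
    simp

lemma SGE_ff (i : ℕ) : SGE (i : ℤ) (ff i) := by
  intro k d hd
  rw [coeff_ff]
  split
  · rename_i h; subst h
    simp only [Nat.cast_zero, mul_zero, neg_zero] at hd
    rw [HahnSeries.coeff_one, if_neg (by omega)]
  split
  · rename_i h h1; subst h1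
    exact HahnSeries.coeff_single_of_ne (by push_cast at hd ⊢; omega)
  · simp

lemma zp_of_nonneg {f : PowerSeries (LaurentSeries ℚ)} {z : ℤ} (hz : 0 ≤ z) :
    zp f (-z) = f⁻¹ ^ z.toNat := by
  rw [zp, neg_neg, (by omega : (-z).toNat = 0), pow_zero, one_mul]

lemma zp_of_neg {f : PowerSeries (LaurentSeries ℚ)} {z : ℤ} (hz : z < 0) :
    zp f (-z) = f ^ (-z).toNat := by
  rw [zp, neg_neg, (by omega : z.toNat = 0), pow_zero, mul_one]

lemma SGE_zp (i : ℕ) (z : ℤ) : SGE (i : ℤ) (zp (ff i) (-z)) := by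
  rcases le_or_gt 0 z with hz | hz
  · rw [zp_of_nonneg hz, ff_inv]
    exact SGE_pow (SGE_gg i) _
  · rw [zp_of_neg hz]
    exact SGE_pow (SGE_ff i) _

/-- coefficients of powers of the geometric series. -/
def bb : ℕ → ℕ → ℚ
  | 0, n => if n = 0 then 1 else 0
  | (t+1), n => ∑ j ∈ Finset.range (n + 1), bb t j

lemma coeff_gg_pow (i t n : ℕ) :
    PowerSeries.coeff n ((gg i) ^ t) =
      HahnSeries.single (-((i : ℤ) * n)) (bb t n) := by
  induction t generalizing n with
  | zero =>
    rw [pow_zero, PowerSeries.coeff_one, bb]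
    split
    · rename_i h; subst h; simp
    · rw [HahnSeries.single_eq_zero]
  | succ m ih =>
    rw [pow_succ, PowerSeries.coeff_mul]
    have : ∀ p ∈ Finset.HasAntidiagonal.antidiagonal n,
        PowerSeries.coeff p.1 ((gg i) ^ m) *
          PowerSeries.coeff p.2 (gg i) =
        HahnSeries.single (-((i : ℤ) * n)) (bb m p.1) := by
      intro p hp
      rw [Finset.HasAntidiagonal.mem_antidiagonal] at hp
      rw [ih, coeff_gg, HahnSeries.single_mul_single, mul_one]
      congr 1
      push_cast [← hp]
      ring_nf
    rw [Finset.sum_congr rfl this]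
    have hs : ∑ x ∈ Finset.HasAntidiagonal.antidiagonal n,
        HahnSeries.single (-((i:ℤ) * n)) (bb m x.1)
        = HahnSeries.single (-((i:ℤ) * n)) (∑ x ∈ Finset.HasAntidiagonal.antidiagonal n, bb m x.1) :=
      (map_sum (HahnSeries.single.addMonoidHom (-((i:ℤ) * n))) _ _).symm
    rw [hs, Finset.Nat.sum_antidiagonal_eq_sum_range_succ_mk]
    rfl

lemma bb_one (n : ℕ) : bb 1 n = 1 := by
  rw [bb]
  rw [Finset.sum_eq_single 0]
  · rfl
  · intro j _ hj; simp [bb, hj]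
  · intro h; exact absurd (Finset.mem_range.2 (by omega)) h

lemma bb_pos' (t : ℕ) : 1 ≤ t → ∀ n, 0 < bb t n := by
  induction t with
  | zero => omega
  | succ m ih =>
    intro _ n
    rcases Nat.eq_zero_or_pos m with h | h
    · subst h; rw [bb_one]; norm_num
    · rw [bb]
      apply Finset.sum_pos
      · intro j _; exact ih h j
      · exact ⟨0, Finset.mem_range.2 (by omega)⟩

lemma bb_pos {t : ℕ} (ht : 1 ≤ t) (n : ℕ) : 0 < bb t n := bb_pos' t ht n

lemma bb_strict {t : ℕ} (ht : 2 ≤ t) (n : ℕ) : bb t n < bb t (n + 1) := by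
  obtain ⟨m, rfl⟩ : ∃ m, t = m + 1 := ⟨t - 1, by omega⟩
  show bb (m+1) n < bb (m+1) (n+1)
  rw [bb, bb, Finset.sum_range_succ (f := fun j => bb m j) (n := n + 1)]
  have := bb_pos (t := m) (by omega) (n + 1)
  linarith

noncomputable def GG (s : ℕ) (a : ℕ → ℤ) : PowerSeries (LaurentSeries ℚ) :=
  ∏ i ∈ Finset.range s, zp (ff i) (-(a i))

lemma Zser_eq (s : ℕ) (a : ℕ → ℤ) (hs : 0 ≤ a s) :
    Zser s a = GG s a * (gg s) ^ (a s).toNat := by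
  rw [Zser, Finset.prod_range_succ, GG]
  congr 1
  rw [zp_of_nonneg hs, ff_inv]

lemma SGE_GG (s : ℕ) (a : ℕ → ℤ) : SGE ((s : ℤ) - 1) (GG s a) := by
  rw [GG]
  refine Finset.prod_induction _ (SGE ((s:ℤ) - 1)) (fun _ _ => SGE_mul) (SGE_one _) ?_
  intro i hi
  rw [Finset.mem_range] at hi
  exact SGE_mono (by omega) (SGE_zp i (a i))

lemma constantCoeff_zp_ff (i : ℕ) (z : ℤ) :
    PowerSeries.constantCoeff (zp (ff i) z) = 1 := by
  rw [zp, map_mul, map_pow, map_pow, constantCoeff_ff,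
    PowerSeries.constantCoeff_inv, constantCoeff_ff]
  simp

lemma coeff_GG_zero (s : ℕ) (a : ℕ → ℤ) :
    PowerSeries.coeff 0 (GG s a) = 1 := by
  rw [PowerSeries.coeff_zero_eq_constantCoeff, GG, map_prod]
  apply Finset.prod_eq_one
  intro i _
  exact constantCoeff_zp_ff i (-(a i))

lemma coeff_mul_uupow (x : LaurentSeries ℚ) (m : ℕ) (d : ℤ) :
    (x * uu ^ m).coeff d = x.coeff (d - m) := by
  rw [uu_pow]
  have := HahnSeries.coeff_mul_single_add (r := (1:ℚ)) (x := x) (a := d - m) (b := (m:ℤ))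
  rw [sub_add_cancel] at this
  rw [this, mul_one]

lemma cser_coeff (s : ℕ) (a : ℕ → ℤ) (hs : 0 ≤ a s) (n : ℕ) (e : ℤ) :
    (cser s a n).coeff e = ∑ k ∈ Finset.range (n + 1),
      (PowerSeries.coeff k (GG s a)).coeff (e + (s : ℤ) * ((n - k : ℕ) : ℤ))
        * bb (a s).toNat (n - k) := by
  rw [cser, Zser_eq s a hs, PowerSeries.coeff_mul]
  have h1 : (∑ p ∈ Finset.HasAntidiagonal.antidiagonal n,
      PowerSeries.coeff p.1 (GG s a) *
        PowerSeries.coeff p.2 ((gg s) ^ (a s).toNat)).coeff e =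
      ∑ p ∈ Finset.HasAntidiagonal.antidiagonal n,
        (PowerSeries.coeff p.1 (GG s a) *
          PowerSeries.coeff p.2 ((gg s) ^ (a s).toNat)).coeff e :=
    map_sum (HahnSeries.coeff.addMonoidHom e) _ _
  rw [h1]
  have h2 : ∀ p ∈ Finset.HasAntidiagonal.antidiagonal n,
      (PowerSeries.coeff p.1 (GG s a) *
        PowerSeries.coeff p.2 ((gg s) ^ (a s).toNat)).coeff e =
      (PowerSeries.coeff p.1 (GG s a)).coeff (e + (s : ℤ) * p.2)
        * bb (a s).toNat p.2 := by
    intro p _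
    rw [coeff_gg_pow]
    have := HahnSeries.coeff_mul_single_add (r := bb (a s).toNat p.2)
      (x := PowerSeries.coeff p.1 (GG s a))
      (a := e + (s : ℤ) * p.2) (b := -((s : ℤ) * p.2))
    rw [show e + (s:ℤ) * p.2 + -((s:ℤ) * p.2) = e by ring] at this
    rw [this]
  rw [Finset.sum_congr rfl h2, Finset.Nat.sum_antidiagonal_eq_sum_range_succ_mk]

lemma GG_coeff_vanish (s : ℕ) (a : ℕ → ℤ) {m : ℕ} {d : ℤ} (h : d < m) :
    (PowerSeries.coeff m (GG s a)).coeff (d - (s : ℤ) * m) = 0 := by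
  apply SGE_GG s a
  have : ((s : ℤ) - 1) * m = (s : ℤ) * m - m := by ring
  omega

lemma key_conv (s : ℕ) (a : ℕ → ℤ) (h1 : a s = 1) (n : ℕ) (d : ℤ) :
    (cser s a n * uu ^ (n * s)).coeff d
      = ∑ k ∈ Finset.range (n + 1),
          (PowerSeries.coeff k (GG s a)).coeff (d - (s : ℤ) * k) := by
  rw [coeff_mul_uupow, cser_coeff s a (by omega)]
  apply Finset.sum_congr rfl
  intro k hk
  rw [Finset.mem_range] at hk
  have hkn : k ≤ n := by omega
  rw [h1]
  simp only [Int.toNat_one, bb_one, mul_one]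
  congr 1
  push_cast [Nat.cast_sub hkn]
  ring

lemma key_div (s : ℕ) (a : ℕ → ℤ) (hs : 0 ≤ a s) (n : ℕ) :
    (cser s a n * uu ^ (n * s)).coeff 0 = bb (a s).toNat n := by
  rw [coeff_mul_uupow, cser_coeff s a hs]
  rw [Finset.sum_eq_single 0]
  · have harg : (0 : ℤ) - ((n * s : ℕ) : ℤ) + (s : ℤ) * ((n - 0 : ℕ) : ℤ) = 0 := by
      push_cast [Nat.sub_zero]; ring
    rw [harg, coeff_GG_zero, HahnSeries.coeff_one, if_pos rfl, one_mul, Nat.sub_zero]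
  · intro k hk hk0
    rw [Finset.mem_range] at hk
    have hkn : k ≤ n := by omega
    have harg : (0 : ℤ) - ((n * s : ℕ) : ℤ) + (s : ℤ) * ((n - k : ℕ) : ℤ)
        = 0 - (s : ℤ) * k := by
      push_cast [Nat.cast_sub hkn]; ring
    rw [harg, GG_coeff_vanish s a (by omega : (0:ℤ) < k), zero_mul]
  · intro h
    exact absurd (Finset.mem_range.2 (by omega)) h


/-- With `a_s ≥ 1`, the sequence `c_n/q^{ns}` converges coefficientwise in powers
of `q⁻¹` (i.e. every coefficient of the Laurent expansion eventually stabilizes)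
if and only if `a_s = 1`. -/
theorem stmt_8 (s : ℕ) (a : ℕ → ℤ) (hpos : 1 ≤ a s) :
    (∃ L : LaurentSeries ℚ, ∀ d : ℤ, ∀ᶠ n in Filter.atTop,
        (cser s a n * uu ^ (n * s)).coeff d = L.coeff d) ↔ a s = 1 := by
  constructor
  · rintro ⟨L, hL⟩
    by_contra hne
    have h2 : 2 ≤ (a s).toNat := by omega
    obtain ⟨N, hN⟩ := Filter.eventually_atTop.1 (hL 0)
    have e1 := hN N (le_refl N)
    have e2 := hN (N + 1) (by omega)
    rw [key_div s a (by omega)] at e1 e2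
    exact absurd (e1.trans e2.symm) (ne_of_lt (bb_strict h2 N))
  · intro h1
    refine ⟨((PowerSeries.mk fun N => ∑ m ∈ Finset.range (N + 1),
        (PowerSeries.coeff m (GG s a)).coeff ((N : ℤ) - (s : ℤ) * m)
        : PowerSeries ℚ) : LaurentSeries ℚ), ?_⟩
    intro d
    rw [Filter.eventually_atTop]
    refine ⟨d.toNat, fun n hn => ?_⟩
    rw [key_conv s a h1, PowerSeries.coeff_coe]
    rcases lt_or_ge d 0 with hd | hd
    · rw [if_pos hd]
      apply Finset.sum_eq_zero
      intro m _
      exact GG_coeff_vanish s a (by omega)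
    · rw [if_neg (by omega), PowerSeries.coeff_mk]
      have hna : ((d.natAbs : ℤ)) = d := Int.natAbs_of_nonneg hd
      rw [hna]
      refine (Finset.sum_subset ?_ ?_).symm
      · intro m hm
        rw [Finset.mem_range] at hm ⊢
        omega
      · intro m _ hm
        rw [Finset.mem_range] at hm
        exact GG_coeff_vanish s a (by omega)
end

section
/- For the sequence c_n = coefficient of tⁿ in ∏_{i=0}^{s}(1-qⁱt)^{-aᵢ} with a_s = 1 and aᵢ ∈ ℤ, the quotient c_n/q^{ns} converges in ℤ[[q^{-1}]] to ∏_{i=0}^{s-1}(1-q^{i-s})^{-aᵢ}. -/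
namespace Stmt9

open Finset PowerSeries

/-- "order at least N" -/
def OZ (N : ℤ) (x : LaurentSeries ℚ) : Prop := ∀ d : ℤ, d < N → x.coeff d = 0

lemma OZ.mono {M N : ℤ} (h : M ≤ N) {x : LaurentSeries ℚ} (hx : OZ N x) : OZ M x :=
  fun d hd => hx d (lt_of_lt_of_le hd h)

lemma OZ_zero (N : ℤ) : OZ N 0 := fun d _ => rfl

lemma OZ_one : OZ 0 1 := by
  intro d hd
  rw [HahnSeries.coeff_one, if_neg (by omega)]

lemma OZ.add {N : ℤ} {x y : LaurentSeries ℚ} (hx : OZ N x) (hy : OZ N y) : OZ N (x + y) := by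
  intro d hd; rw [HahnSeries.coeff_add, hx d hd, hy d hd, add_zero]

lemma OZ.neg {N : ℤ} {x : LaurentSeries ℚ} (hx : OZ N x) : OZ N (-x) := by
  intro d hd; rw [HahnSeries.coeff_neg, hx d hd, neg_zero]

lemma OZ.sub {N : ℤ} {x y : LaurentSeries ℚ} (hx : OZ N x) (hy : OZ N y) : OZ N (x - y) := by
  rw [sub_eq_add_neg]; exact hx.add hy.neg

lemma OZ_sum {N : ℤ} {ι : Type*} {t : Finset ι} {f : ι → LaurentSeries ℚ}
    (h : ∀ i ∈ t, OZ N (f i)) : OZ N (∑ i ∈ t, f i) := by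
  classical
  induction t using Finset.induction with
  | empty => simpa using OZ_zero N
  | insert _ _ hx ih =>
    rw [Finset.sum_insert hx]
    exact (h _ (Finset.mem_insert_self _ _)).add
      (ih fun i hi => h i (Finset.mem_insert_of_mem hi))

lemma OZ.mul {N M : ℤ} {x y : LaurentSeries ℚ} (hx : OZ N x) (hy : OZ M y) :
    OZ (N + M) (x * y) := by
  intro d hd
  rw [HahnSeries.coeff_mul]
  apply Finset.sum_eq_zero
  rintro ⟨i, j⟩ hij
  rw [Finset.mem_addAntidiagonal] at hij
  obtain ⟨_, _, hd'⟩ := hij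
  by_cases h : i < N
  · rw [hx i h, zero_mul]
  · rw [hy j (by omega), mul_zero]

lemma OZ_single (k : ℤ) (r : ℚ) : OZ k (HahnSeries.single k r) := by
  intro d hd
  exact HahnSeries.coeff_single_of_ne (by omega)

lemma uu_ne : uu ≠ 0 := HahnSeries.single_ne_zero one_ne_zero

lemma uu_pow (n : ℕ) : uu ^ n = HahnSeries.single (n : ℤ) (1 : ℚ) := by
  rw [uu, HahnSeries.single_pow]
  simp

lemma OZ_uupow (n : ℕ) : OZ n (uu ^ n) := by
  rw [uu_pow]; exact OZ_single _ _

lemma uupow_ne (n : ℕ) : uu ^ n ≠ 0 := pow_ne_zero _ uu_ne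

lemma qq_pow_mul (j k : ℕ) : qq ^ k * uu ^ (j + k) = uu ^ j := by
  rw [qq, inv_pow, pow_add, mul_comm, mul_assoc,
    mul_inv_cancel₀ (pow_ne_zero k uu_ne), mul_one]

/-- OZ 0 for the inverse of a "power series with nonzero constant term". -/
lemma OZ_inv {x : LaurentSeries ℚ} (hx : OZ 0 x) (h0 : x.coeff 0 ≠ 0) : OZ 0 x⁻¹ := by
  have hxne : x ≠ 0 := by
    intro h; exact h0 (by rw [h]; rfl)
  have hord : x.order = 0 := by
    apply le_antisymm (HahnSeries.order_le_of_coeff_ne_zero h0)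
    rw [HahnSeries.order_of_ne hxne, Set.IsWF.le_min_iff]
    intro b hb
    by_contra hlt
    exact hb (hx b (by omega))
  have hinvne : x⁻¹ ≠ 0 := inv_ne_zero hxne
  have := HahnSeries.order_mul hinvne hxne
  rw [inv_mul_cancel₀ hxne, HahnSeries.order_one, hord, add_zero] at this
  intro d hd
  exact HahnSeries.coeff_eq_zero_of_lt_order (by rw [← this]; exact hd)

section Ev

variable (s : ℕ)

/-- partial sums of the evaluation at `t = u^s`. -/
noncomputable def An (f : PowerSeries (LaurentSeries ℚ)) (n : ℕ) : LaurentSeries ℚ :=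
  ∑ m ∈ Finset.range (n + 1), PowerSeries.coeff m f * uu ^ (s * m)

/-- `f` evaluates at `t = u^s` to `L`, with tameness control. -/
def Ev (f : PowerSeries (LaurentSeries ℚ)) (L : LaurentSeries ℚ) : Prop :=
  (∀ m : ℕ, OZ m (PowerSeries.coeff m f * uu ^ (s * m))) ∧
  ∀ n : ℕ, OZ ((n : ℤ) + 1) (L - An s f n)

variable {s}

lemma OZ0_An {f : PowerSeries (LaurentSeries ℚ)}
    (h : ∀ m : ℕ, OZ m (PowerSeries.coeff m f * uu ^ (s * m))) (n : ℕ) :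
    OZ 0 (An s f n) :=
  OZ_sum fun m _ => (h m).mono (by positivity)

lemma Ev.oz0 {f : PowerSeries (LaurentSeries ℚ)} {L : LaurentSeries ℚ}
    (h : Ev s f L) : OZ 0 L := by
  have h1 : OZ 0 (L - An s f 0) := (h.2 0).mono (by norm_num)
  have h2 : OZ 0 (An s f 0) := OZ0_An h.1 0
  have := h1.add h2
  rwa [sub_add_cancel] at this

lemma Ev.one : Ev s 1 1 := by
  constructor
  · intro m
    rcases Nat.eq_zero_or_pos m with rfl | hm
    · simpa using OZ_one
    · rw [PowerSeries.coeff_one, if_neg (by omega), zero_mul]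
      exact OZ_zero _
  · intro n
    have : An s 1 n = 1 := by
      rw [An, Finset.sum_eq_single 0]
      · simp
      · intro m _ hm
        rw [PowerSeries.coeff_one, if_neg hm, zero_mul]
      · intro h; exact absurd (Finset.mem_range.2 (by omega)) h
    rw [this, sub_self]
    exact OZ_zero _

lemma Ev.mul {f g : PowerSeries (LaurentSeries ℚ)} {L M : LaurentSeries ℚ}
    (hf : Ev s f L) (hg : Ev s g M) : Ev s (f * g) (L * M) := by
  classical
  -- the term function
  set T : ℕ × ℕ → LaurentSeries ℚ := fun p =>
    (PowerSeries.coeff p.1 f * uu ^ (s * p.1)) *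
      (PowerSeries.coeff p.2 g * uu ^ (s * p.2)) with hT
  have hcoeff : ∀ m : ℕ, PowerSeries.coeff m (f * g) * uu ^ (s * m) =
      ∑ p ∈ Finset.HasAntidiagonal.antidiagonal m, T p := by
    intro m
    rw [PowerSeries.coeff_mul, Finset.sum_mul]
    apply Finset.sum_congr rfl
    rintro ⟨i, j⟩ hij
    rw [Finset.HasAntidiagonal.mem_antidiagonal] at hij
    simp only [hT]
    have : s * m = s * i + s * j := by rw [← hij]; ring
    rw [this, pow_add]
    ring
  have hOZT : ∀ p : ℕ × ℕ, OZ ((p.1 : ℤ) + p.2) (T p) := fun p =>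
    (hf.1 p.1).mul (hg.1 p.2)
  constructor
  · intro m
    rw [hcoeff m]
    apply OZ_sum
    rintro ⟨i, j⟩ hij
    rw [Finset.HasAntidiagonal.mem_antidiagonal] at hij
    exact (hOZT (i, j)).mono (by simp [← hij])
  · intro n
    -- An of product as a sum over the triangle
    have hAnfg : An s (f * g) n =
        ∑ p ∈ (Finset.range (n+1) ×ˢ Finset.range (n+1)).filter
          (fun p => p.1 + p.2 ≤ n), T p := by
      rw [An]
      have hbi : (Finset.range (n+1) ×ˢ Finset.range (n+1)).filter
          (fun p => p.1 + p.2 ≤ n) =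
          (Finset.range (n+1)).biUnion (fun m => Finset.HasAntidiagonal.antidiagonal m) := by
        ext ⟨i, j⟩
        simp only [Finset.mem_filter, Finset.mem_product, Finset.mem_range,
          Finset.mem_biUnion, Finset.HasAntidiagonal.mem_antidiagonal]
        constructor
        · rintro ⟨⟨_, _⟩, h⟩; exact ⟨i + j, by omega, rfl⟩
        · rintro ⟨m, hm, hmem⟩; omega
      rw [hbi, Finset.sum_biUnion]
      · exact Finset.sum_congr rfl fun m _ => hcoeff m
      · intro x _ y _ hxy
        simp only [Finset.disjoint_left, Finset.HasAntidiagonal.mem_antidiagonal]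
        rintro p h1 h2
        exact hxy (h1.symm.trans h2)
    have hAA : An s f n * An s g n =
        ∑ p ∈ Finset.range (n+1) ×ˢ Finset.range (n+1), T p := by
      rw [An, An, Finset.sum_mul_sum, Finset.sum_product]
    have hdiff : OZ ((n : ℤ) + 1) (An s f n * An s g n - An s (f * g) n) := by
      rw [hAA, hAnfg, ← Finset.sum_sdiff_eq_sub (Finset.filter_subset _ _)]
      apply OZ_sum
      rintro ⟨i, j⟩ hij
      rw [Finset.mem_sdiff, Finset.mem_filter] at hij
      have : ¬ (i + j ≤ n) := fun h => hij.2 ⟨hij.1, h⟩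
      exact (hOZT (i, j)).mono (by omega)
    have key : L * M - An s (f * g) n =
        (L - An s f n) * M + An s f n * (M - An s g n) +
          (An s f n * An s g n - An s (f * g) n) := by ring
    rw [key]
    refine (OZ.add (OZ.add ?_ ?_) hdiff)
    · exact (((hf.2 n).mul hg.oz0).mono (by omega))
    · exact (((OZ0_An hf.1 n).mul (hg.2 n)).mono (by omega))

lemma Ev.pow {f : PowerSeries (LaurentSeries ℚ)} {L : LaurentSeries ℚ}
    (h : Ev s f L) (k : ℕ) : Ev s (f ^ k) (L ^ k) := by
  induction k with
  | zero => simpa using Ev.one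
  | succ k ih => rw [pow_succ, pow_succ]; exact ih.mul h

lemma Ev.prod {ι : Type*} {t : Finset ι} {f : ι → PowerSeries (LaurentSeries ℚ)}
    {L : ι → LaurentSeries ℚ} (h : ∀ i ∈ t, Ev s (f i) (L i)) :
    Ev s (∏ i ∈ t, f i) (∏ i ∈ t, L i) := by
  classical
  induction t using Finset.induction with
  | empty => simpa using Ev.one
  | insert _ _ hx ih =>
    rw [Finset.prod_insert hx, Finset.prod_insert hx]
    exact (h _ (Finset.mem_insert_self _ _)).mul
      (ih fun i hi => h i (Finset.mem_insert_of_mem hi))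

end Ev

section Base

open PowerSeries

lemma Bcoeff0 (k : ℕ) (hk : 1 ≤ k) : ((1 : LaurentSeries ℚ) - uu ^ k).coeff 0 = 1 := by
  rw [HahnSeries.coeff_sub, uu_pow, HahnSeries.coeff_single_of_ne (by omega : (0:ℤ) ≠ (k:ℤ))]
  simp

lemma B_ne (k : ℕ) (hk : 1 ≤ k) : (1 : LaurentSeries ℚ) - uu ^ k ≠ 0 := by
  intro h
  have := Bcoeff0 k hk
  rw [h] at this
  exact one_ne_zero this.symm

lemma OZ_B (k : ℕ) : OZ 0 ((1 : LaurentSeries ℚ) - uu ^ k) :=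
  OZ_one.sub ((OZ_uupow k).mono (by positivity))

lemma OZ_Binv (k : ℕ) (hk : 1 ≤ k) : OZ 0 ((1 : LaurentSeries ℚ) - uu ^ k)⁻¹ :=
  OZ_inv (OZ_B k) (by rw [Bcoeff0 k hk]; exact one_ne_zero)

lemma b_coeff_zero (i : ℕ) :
    PowerSeries.coeff 0
      (1 - PowerSeries.C (qq ^ i) * PowerSeries.X) = 1 := by
  simp

lemma b_coeff_one (i : ℕ) :
    PowerSeries.coeff 1
      (1 - PowerSeries.C (qq ^ i) * PowerSeries.X) = -(qq ^ i) := by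
  simp [PowerSeries.coeff_one]

lemma b_coeff_big (i m : ℕ) (hm : 2 ≤ m) :
    PowerSeries.coeff m
      (1 - PowerSeries.C (qq ^ i) * PowerSeries.X) = 0 := by
  rw [map_sub, PowerSeries.coeff_one, if_neg (by omega)]
  rw [PowerSeries.coeff_C_mul, PowerSeries.coeff_X, if_neg (by omega)]
  simp

lemma binv (i : ℕ) :
    (1 - PowerSeries.C (qq ^ i) * PowerSeries.X)⁻¹ =
      PowerSeries.mk fun m => (qq ^ i) ^ m := by
  symm
  rw [PowerSeries.eq_inv_iff_mul_eq_one]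
  · ext n
    have hre : (PowerSeries.mk fun m => (qq ^ i) ^ m) *
        (1 - PowerSeries.C (qq ^ i) * PowerSeries.X) =
        (PowerSeries.mk fun m => (qq ^ i) ^ m) -
          PowerSeries.C (qq ^ i) *
            (PowerSeries.X * PowerSeries.mk fun m => (qq ^ i) ^ m) := by ring
    rw [hre, map_sub]
    cases n with
    | zero =>
      rw [PowerSeries.coeff_zero_eq_constantCoeff, map_mul]
      simp
    | succ n =>
      rw [PowerSeries.coeff_C_mul, PowerSeries.coeff_succ_X_mul, PowerSeries.coeff_mk,
        PowerSeries.coeff_mk, PowerSeries.coeff_one, if_neg (by omega), pow_succ]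
      ring
  · rw [← PowerSeries.coeff_zero_eq_constantCoeff, b_coeff_zero]
    exact one_ne_zero

lemma qq_uu (i : ℕ) (hij : i ≤ s) : qq ^ i * uu ^ s = uu ^ (s - i) := by
  have := qq_pow_mul (s - i) i
  rwa [Nat.sub_add_cancel hij] at this

lemma ev_b {s i : ℕ} (hi : i < s) :
    Ev s (1 - PowerSeries.C (qq ^ i) * PowerSeries.X)
      (1 - uu ^ (s - i)) := by
  have hki : qq ^ i * uu ^ s = uu ^ (s - i) := qq_uu i hi.le
  constructor
  · intro m
    match m with
    | 0 => rw [b_coeff_zero]; simpa using OZ_one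
    | 1 =>
      have hterm : -(qq ^ i) * uu ^ (s * 1) = -(uu ^ (s - i)) := by
        rw [Nat.mul_one]
        linear_combination -hki
      rw [b_coeff_one, hterm]
      exact ((OZ_uupow (s - i)).mono (by omega)).neg
    | (m + 2) =>
      rw [b_coeff_big i _ (by omega), zero_mul]
      exact OZ_zero _
  · intro n
    have hAn : ∀ n : ℕ, An s (1 - PowerSeries.C (qq ^ i) * PowerSeries.X) n
        = if n = 0 then 1 else 1 - uu ^ (s - i) := by
      intro n
      induction n with
      | zero => simp [An, b_coeff_zero]
      | succ k ih =>
        rw [An, Finset.sum_range_succ, ← An, ih]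
        rcases Nat.eq_zero_or_pos k with rfl | hk
        · rw [if_pos rfl, if_neg (by omega), b_coeff_one, Nat.mul_one, hki.symm]
          ring
        · rw [if_neg (by omega), if_neg (by omega), b_coeff_big i _ (by omega), zero_mul,
            add_zero]
    rcases Nat.eq_zero_or_pos n with rfl | hn
    · rw [hAn 0, if_pos rfl]
      have : (1 : LaurentSeries ℚ) - uu ^ (s - i) - 1 = -(uu ^ (s - i)) := by ring
      rw [this]
      exact ((OZ_uupow (s - i)).mono (by omega)).neg
    · rw [hAn n, if_neg (by omega), sub_self]
      exact OZ_zero _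

lemma ev_binv {s i : ℕ} (hi : i < s) :
    Ev s (1 - PowerSeries.C (qq ^ i) * PowerSeries.X)⁻¹
      (1 - uu ^ (s - i))⁻¹ := by
  have hk : 1 ≤ s - i := by omega
  have hterm : ∀ m : ℕ,
      PowerSeries.coeff m
        (1 - PowerSeries.C (qq ^ i) * PowerSeries.X)⁻¹ * uu ^ (s * m)
      = (uu ^ (s - i)) ^ m := by
    intro m
    rw [binv, PowerSeries.coeff_mk, ← pow_mul, ← pow_mul]
    have hsm : s * m = (s - i) * m + i * m := by
      have : s - i + i = s := by omega
      calc s * m = (s - i + i) * m := by rw [this]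
        _ = (s - i) * m + i * m := by ring
    rw [hsm]
    exact qq_pow_mul ((s - i) * m) (i * m)
  constructor
  · intro m
    rw [hterm m, ← pow_mul]
    refine (OZ_uupow ((s - i) * m)).mono ?_
    exact_mod_cast Nat.cast_le.mpr (Nat.le_mul_of_pos_left m (by omega))
  · intro n
    have hA : An s (1 - PowerSeries.C (qq ^ i) * PowerSeries.X)⁻¹ n =
        ∑ m ∈ Finset.range (n + 1), (uu ^ (s - i)) ^ m := by
      rw [An]
      exact Finset.sum_congr rfl fun m _ => hterm m
    set x : LaurentSeries ℚ := uu ^ (s - i) with hx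
    have hgeom : (1 - x) * ∑ m ∈ Finset.range (n + 1), x ^ m = 1 - x ^ (n + 1) := by
      have := geom_sum_mul x (n + 1)
      linear_combination -this
    have hBne := B_ne (s - i) hk
    have hkey : (1 - x)⁻¹ - An s
          (1 - PowerSeries.C (qq ^ i) * PowerSeries.X)⁻¹ n
        = (1 - x)⁻¹ * x ^ (n + 1) := by
      rw [hA]
      have h2 : x ^ (n + 1) = (1 - x) * ((1 - x)⁻¹ - ∑ m ∈ Finset.range (n + 1), x ^ m) := by
        rw [mul_sub, mul_inv_cancel₀ hBne, hgeom]
        ring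
      rw [h2, ← mul_assoc, inv_mul_cancel₀ hBne, one_mul]
    rw [hkey]
    have h3 : OZ ((n : ℤ) + 1) (x ^ (n + 1)) := by
      rw [hx, ← pow_mul]
      refine (OZ_uupow ((s - i) * (n + 1))).mono ?_
      exact_mod_cast Nat.cast_le.mpr (Nat.le_mul_of_pos_left (n + 1) (by omega))
    have := (OZ_Binv (s - i) hk).mul h3
    rwa [zero_add] at this

lemma zpow_split (x : LaurentSeries ℚ) (z : ℤ) :
    x ^ z = x ^ z.toNat * x⁻¹ ^ (-z).toNat := by
  obtain ⟨n, rfl | rfl⟩ := z.eq_nat_or_neg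
  · have h1 : ((n : ℤ)).toNat = n := by omega
    have h2 : (-(n : ℤ)).toNat = 0 := by omega
    rw [h1, h2, pow_zero, mul_one, zpow_natCast]
  · have h1 : ((-(n : ℤ))).toNat = 0 := by omega
    have h2 : (-(-(n : ℤ))).toNat = n := by omega
    rw [h1, h2, pow_zero, one_mul, zpow_neg, zpow_natCast, inv_pow]

lemma ev_zp {s i : ℕ} (hi : i < s) (z : ℤ) :
    Ev s (zp (1 - PowerSeries.C (qq ^ i) * PowerSeries.X) z)
      ((1 - uu ^ (s - i)) ^ z) := by
  rw [zpow_split, zp]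
  exact ((ev_b hi).pow _).mul ((ev_binv hi).pow _)

end Base

end Stmt9

open Stmt9 in
/-- With `a_s = 1`, the sequence `c_n/q^{ns}` converges coefficientwise in powers
of `q⁻¹` to `∏_{i=0}^{s-1} (1 - q^{i-s})^{-aᵢ}` (note `q^{i-s} = u^{s-i}` lies in
the maximal ideal of `ℚ[[u]]`). -/
theorem stmt_9 (s : ℕ) (a : ℕ → ℤ) (ha : a s = 1) :
    ∀ d : ℤ, ∀ᶠ n in Filter.atTop,
      (cser s a n * uu ^ (n * s)).coeff d =
        (∏ i ∈ Finset.range s, (1 - qq ^ ((i : ℤ) - s)) ^ (-(a i))).coeff d := by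
  intro d
  rw [Filter.eventually_atTop]
  refine ⟨d.toNat, fun n hn => ?_⟩
  classical
  set W : PowerSeries (LaurentSeries ℚ) :=
    ∏ i ∈ Finset.range s,
      zp (1 - PowerSeries.C (qq ^ i) * PowerSeries.X) (-(a i)) with hW
  have hEv : Ev s W (∏ i ∈ Finset.range s, (1 - uu ^ (s - i)) ^ (-(a i))) :=
    Ev.prod fun i hi => ev_zp (Finset.mem_range.1 hi) _
  have hLeq : (∏ i ∈ Finset.range s, (1 - qq ^ ((i : ℤ) - s)) ^ (-(a i)))
      = ∏ i ∈ Finset.range s, (1 - uu ^ (s - i)) ^ (-(a i)) := by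
    apply Finset.prod_congr rfl
    intro i hi
    have hi' : i < s := Finset.mem_range.1 hi
    have hpow : qq ^ ((i : ℤ) - s) = uu ^ (s - i) := by
      rw [qq, inv_zpow, ← zpow_neg]
      have h1 : -((i : ℤ) - s) = ((s - i : ℕ) : ℤ) := by omega
      rw [h1, zpow_natCast]
    rw [hpow]
  have hZ : Zser s a =
      W * (1 - PowerSeries.C (qq ^ s) * PowerSeries.X)⁻¹ := by
    have h1 : ((-1 : ℤ)).toNat = 0 := by decide
    have h2 : ((-(-1 : ℤ))).toNat = 1 := by decide
    rw [Zser, Finset.prod_range_succ, ha]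
    congr 1
    rw [zp, h1, h2, pow_zero, one_mul, pow_one]
  have hc : cser s a n * uu ^ (n * s) = An s W n := by
    rw [cser, hZ, PowerSeries.coeff_mul, Finset.sum_mul]
    have hterm : ∀ p ∈ Finset.HasAntidiagonal.antidiagonal n,
        (PowerSeries.coeff p.1 W *
          PowerSeries.coeff p.2
            (1 - PowerSeries.C (qq ^ s) * PowerSeries.X)⁻¹) * uu ^ (n * s)
        = PowerSeries.coeff p.1 W * uu ^ (s * p.1) := by
      rintro ⟨j, k⟩ hp
      rw [Finset.HasAntidiagonal.mem_antidiagonal] at hp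
      rw [binv, PowerSeries.coeff_mk, ← pow_mul, mul_assoc]
      have hnk : n * s = s * j + s * k := by rw [← hp]; ring
      rw [hnk, qq_pow_mul (s * j) (s * k)]
    rw [Finset.sum_congr rfl hterm, Finset.Nat.sum_antidiagonal_eq_sum_range_succ_mk]
    simp only [An]
  have hd' : d < (n : ℤ) + 1 := by omega
  have h0 := hEv.2 n d hd'
  rw [HahnSeries.coeff_sub, sub_eq_zero] at h0
  rw [hc, hLeq]
  exact h0.symm
end

section
/- Let A be the 4×4 matrix over ℚ(q) given by A = [[q−1,0,0,0],[q−1,q(q−1),0,0],[(q²−q)(q−1),0,q²−1,0],[(1−q)(q−1),0,1−q,(q−1)²]], w = (q−1, (q−1)(q²−1), q², q²+q), v = (1, 1, q²−q, 1−q). Then for every n ≥ 1, w·A^{n−1}·vᵀ = (1/2)·q·(q²−1)·(2(q²−q)^{n−1} − 2(q−1)^{n−1} + (q−1)(q²−1)^{n−1} + (q−1)^{2n−1}). -/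
/-!
`A` is lower triangular with diagonal `q - 1, q(q - 1), q² - 1, (q - 1)²`, so every entry of the
row vector `w A^m` is a combination of the `m`-th powers of these eigenvalues. Guessing the
coefficients and checking the recursion `w A^(m+1) = (w A^m) A` gives `w A^m` in closed form;
pairing it with `v` yields the formula.
-/

open Matrix

/-- The variable `q`, transcendental over `ℚ`. -/
noncomputable def qR : RatFunc ℚ := RatFunc.X

/-- The branching matrix of `GL₂`. -/
noncomputable def Abr : Matrix (Fin 4) (Fin 4) (RatFunc ℚ) :=
  !![qR - 1, 0, 0, 0;
     qR - 1, qR * (qR - 1), 0, 0;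
     (qR ^ 2 - qR) * (qR - 1), 0, qR ^ 2 - 1, 0;
     (1 - qR) * (qR - 1), 0, 1 - qR, (qR - 1) ^ 2]

/-- The row vector `w`. -/
noncomputable def wbr : Fin 4 → RatFunc ℚ :=
  ![qR - 1, (qR - 1) * (qR ^ 2 - 1), qR ^ 2, qR ^ 2 + qR]

/-- The column vector `v`. -/
noncomputable def vbr : Fin 4 → RatFunc ℚ :=
  ![1, 1, qR ^ 2 - qR, 1 - qR]

theorem Matrix.vecMul_pow_eq_of_vecMul_eq_succ {ι R : Type*} [Fintype ι] [DecidableEq ι]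
    [Semiring R] (A : Matrix ι ι R) (u : ℕ → ι → R) (hu : ∀ m, u m ᵥ* A = u (m + 1)) (m : ℕ) :
    u 0 ᵥ* (A ^ m) = u m := by
  induction m with
  | zero => simp
  | succ m ih => rw [pow_succ, ← vecMul_vecMul, ih, hu]

noncomputable def wbrPowClosedForm (m : ℕ) : Fin 4 → RatFunc ℚ :=
  ![qR * (1 - qR ^ 2) * (qR - 1) ^ m + (qR ^ 2 - 1) * (qR ^ 2 - qR) ^ m +
      (qR * (qR - 1) ^ 2 / 2) * (qR ^ 2 - 1) ^ m +
      (qR * (qR ^ 2 - 1) / 2) * (qR - 1) ^ (2 * m),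
    (qR - 1) * (qR ^ 2 - 1) * (qR ^ 2 - qR) ^ m,
    ((qR ^ 2 - qR) / 2) * (qR ^ 2 - 1) ^ m + ((qR ^ 2 + qR) / 2) * (qR - 1) ^ (2 * m),
    (qR ^ 2 + qR) * (qR - 1) ^ (2 * m)]

theorem wbrPowClosedForm_zero : wbrPowClosedForm 0 = wbr := by
  ext i
  fin_cases i <;> simp [wbrPowClosedForm, wbr] <;> ring

theorem wbrPowClosedForm_vecMul_Abr (m : ℕ) :
    wbrPowClosedForm m ᵥ* Abr = wbrPowClosedForm (m + 1) := by
  ext i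
  fin_cases i <;>
    simp [wbrPowClosedForm, Abr, vecMul, dotProduct, Fin.sum_univ_four, pow_succ, mul_add] <;>
    ring

theorem vecMul_wbr_Abr_pow (m : ℕ) : wbr ᵥ* (Abr ^ m) = wbrPowClosedForm m := by
  rw [← wbrPowClosedForm_zero]
  exact vecMul_pow_eq_of_vecMul_eq_succ Abr _ wbrPowClosedForm_vecMul_Abr m

/-- For every `n ≥ 1`, `w·A^{n−1}·vᵀ` equals the closed formula
`(1/2)·q·(q²−1)·(2(q²−q)^{n−1} − 2(q−1)^{n−1} + (q−1)(q²−1)^{n−1} + (q−1)^{2n−1})`. -/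
theorem stmt_14 (n : ℕ) (hn : 1 ≤ n) :
    Matrix.vecMul wbr (Abr ^ (n - 1)) ⬝ᵥ vbr =
      (1 / 2) * qR * (qR ^ 2 - 1) *
        (2 * (qR ^ 2 - qR) ^ (n - 1) - 2 * (qR - 1) ^ (n - 1) +
          (qR - 1) * (qR ^ 2 - 1) ^ (n - 1) + (qR - 1) ^ (2 * n - 1)) := by
  obtain ⟨m, rfl⟩ : ∃ m, n = m + 1 := ⟨n - 1, (Nat.sub_add_cancel hn).symm⟩
  rw [Nat.add_sub_cancel, show 2 * (m + 1) - 1 = 2 * m + 1 by omega, vecMul_wbr_Abr_pow]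
  simp [wbrPowClosedForm, vbr, dotProduct, Fin.sum_univ_four]
  ring
end
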